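/- arXiv:1807.02780 — 9 statements merged into one kernel-verified Lean document; each statement's English description precedes it below -/
import Mathlib

section
/- Let G be a bipartite graph with parts A and B, |A| = m, |B| = m', and at least ε·m·m' edges between A and B. If there exists a positive integer t such that m·ε^t − m^{k₀}·β^t ≥ w, then there exists a subset W ⊆ A with |W| ≥ w such that every subset K ⊆ W with |K| = k₀ has at least β·m' common neighbors in B. -/
open Finset in
lemma drc_sum_pow {X B : Type*} [Fintype B] (t : ℕ) (s : Finset X) (p : X → B → Prop)
    [∀ x b, Decidable (p x b)] :
    ∑ T : Fin t → B, ((s.filter fun x : X => ∀ i, p x (T i)).card : ℝ) =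
      ∑ x ∈ s, ((Finset.univ.filter fun b => p x b).card : ℝ) ^ t := by
  simp_rw [Finset.card_filter]
  push_cast
  rw [Finset.sum_comm]
  refine Finset.sum_congr rfl fun x _ => ?_
  have h1 : ∀ T : Fin t → B, (if ∀ i, p x (T i) then (1:ℝ) else 0)
      = ∏ i : Fin t, if p x (T i) then (1:ℝ) else 0 := by
    intro T; rw [Finset.prod_boole]; simp
  simp_rw [h1]
  rw [Fintype.sum_pow]

/-- **Bipartite dependent random choice.**  Let `G` be a bipartite graph with parts `A`
(of size `m`) and `B` (of size `m'`), with at least `ε·m·m'` edges between `A` and `B`.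
If there is a positive integer `t` with `m·ε^t − m^{k₀}·β^t ≥ w`, then there is a subset
`W ⊆ A` of size at least `w` such that every `K ⊆ W` with `|K| = k₀` has at least `β·m'`
common neighbors in `B`. -/
theorem stmt_0 {A B : Type*} [Fintype A] [Fintype B] [DecidableEq A]
    (Adj : A → B → Bool) (m m' : ℕ) (hm : Fintype.card A = m) (hm' : Fintype.card B = m')
    (ε β : ℝ) (hε : 0 < ε) (hε1 : ε < 1) (hβ : 0 < β) (hβ1 : β < 1)
    (k₀ w : ℕ) (hk₀ : 0 < k₀) (hw : 0 < w)
    (hedges : (ε : ℝ) * m * m' ≤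
      ((Finset.univ.filter fun p : A × B => Adj p.1 p.2).card : ℝ))
    (t : ℕ) (ht : 0 < t)
    (hineq : (w : ℝ) ≤ (m : ℝ) * ε ^ t - (m : ℝ) ^ k₀ * β ^ t) :
    ∃ W : Finset A, (w : ℝ) ≤ (W.card : ℝ) ∧
      ∀ K ⊆ W, K.card = k₀ →
        β * m' ≤ ((Finset.univ.filter fun b : B => ∀ a ∈ K, Adj a b).card : ℝ) := by
  classical
  have hwR : (0:ℝ) < w := by exact_mod_cast hw
  have hεt : (0:ℝ) < ε ^ t := pow_pos hε t
  have hmpos : 0 < m := by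
    by_contra h
    have hm0 : m = 0 := by omega
    rw [hm0] at hineq
    rw [Nat.cast_zero, zero_pow hk₀.ne', zero_mul, zero_mul, sub_zero] at hineq
    linarith
  have hmR : (0:ℝ) < m := by exact_mod_cast hmpos
  by_cases hm'0 : m' = 0
  · refine ⟨Finset.univ, ?_, ?_⟩
    · have h2 : ε ^ t ≤ 1 := pow_le_one₀ hε.le hε1.le
      have h3 : (0:ℝ) ≤ (m:ℝ) ^ k₀ * β ^ t := by positivity
      rw [Finset.card_univ, hm]
      nlinarith
    · intro K _ _
      rw [hm'0]
      simp only [Nat.cast_zero, mul_zero]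
      positivity
  have hm'pos : 0 < m' := Nat.pos_of_ne_zero hm'0
  have hm'R : (0:ℝ) < m' := by exact_mod_cast hm'pos
  have hAne : Nonempty A := Fintype.card_pos_iff.mp (hm ▸ hmpos)
  have hBne : Nonempty B := Fintype.card_pos_iff.mp (hm' ▸ hm'pos)
  -- definitions
  set W' : (Fin t → B) → Finset A :=
    fun T => Finset.univ.filter fun a => ∀ i, Adj a (T i) with hW'
  set Bad : Finset (Finset A) := Finset.univ.filter fun K =>
    K.card = k₀ ∧ ((Finset.univ.filter fun b : B => ∀ a ∈ K, Adj a b).card : ℝ) < β * m'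
    with hBad
  set badIn : (Fin t → B) → Finset (Finset A) :=
    fun T => Bad.filter fun K => K ⊆ W' T with hbadIn
  -- Sum 1
  have hSum1 : ∑ T : Fin t → B, ((W' T).card : ℝ)
      = ∑ a : A, ((Finset.univ.filter fun b => Adj a b = true).card : ℝ) ^ t :=
    drc_sum_pow t Finset.univ (fun a b => Adj a b = true)
  -- Sum 2
  have hsubiff : ∀ (T : Fin t → B) (K : Finset A),
      K ⊆ W' T ↔ ∀ i, ∀ a ∈ K, Adj a (T i) := by
    intro T K
    simp only [hW', Finset.subset_iff, Finset.mem_filter, Finset.mem_univ, true_and]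
    tauto
  have hSum2 : ∑ T : Fin t → B, ((badIn T).card : ℝ)
      = ∑ K ∈ Bad, ((Finset.univ.filter fun b : B => ∀ a ∈ K, Adj a b).card : ℝ) ^ t := by
    rw [← drc_sum_pow t Bad (fun (K : Finset A) b => ∀ a ∈ K, Adj a b = true)]
    refine Finset.sum_congr rfl fun T _ => ?_
    simp only [hbadIn]
    refine congrArg (fun s : Finset (Finset A) => ((s.card : ℕ) : ℝ)) ?_
    ext K
    simp only [Finset.mem_filter]
    rw [hsubiff T K]
  -- degree sum = edge count
  have hE : ((Finset.univ.filter fun p : A × B => Adj p.1 p.2).card : ℝ)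
      = ∑ a : A, ((Finset.univ.filter fun b => Adj a b = true).card : ℝ) := by
    simp_rw [Finset.card_filter]
    push_cast
    rw [Fintype.sum_prod_type]
  -- Jensen bound
  have hJ : (m:ℝ) * ε ^ t * (m':ℝ) ^ t ≤ ∑ a : A,
      ((Finset.univ.filter fun b => Adj a b = true).card : ℝ) ^ t := by
    have key := pow_sum_div_card_le_sum_pow (s := (Finset.univ : Finset A))
      (f := fun a => ((Finset.univ.filter fun b => Adj a b = true).card : ℝ))
      (fun i _ => by positivity) (t - 1)
    rw [Nat.sub_add_cancel ht] at key
    rw [Finset.card_univ, hm] at key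
    have hmono : (ε * m * m') ^ t ≤
        (∑ a : A, ((Finset.univ.filter fun b => Adj a b = true).card : ℝ)) ^ t := by
      apply pow_le_pow_left₀ (by positivity)
      rw [← hE]; exact hedges
    have heq : (ε * m * m') ^ t / (m:ℝ) ^ (t - 1) = (m:ℝ) * ε ^ t * (m':ℝ) ^ t := by
      have hmt : (m:ℝ) ^ t = (m:ℝ) ^ (t - 1) * m := by
        rw [← pow_succ]; congr 1; omega
      rw [mul_pow, mul_pow, hmt]
      field_simp
    calc (m:ℝ) * ε ^ t * (m':ℝ) ^ t = (ε * m * m') ^ t / (m:ℝ) ^ (t - 1) := heq.symm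
      _ ≤ (∑ a : A, ((Finset.univ.filter fun b => Adj a b = true).card : ℝ)) ^ t
          / (m:ℝ) ^ (t - 1) := by
          exact (div_le_div_iff_of_pos_right (by positivity)).mpr hmono
      _ ≤ _ := key
  -- bound on bad sum
  have hBadcard : ((Bad.card : ℝ)) ≤ (m:ℝ) ^ k₀ := by
    have h1 : Bad ⊆ Finset.powersetCard k₀ (Finset.univ : Finset A) := by
      intro K hK
      rw [hBad, Finset.mem_filter] at hK
      exact Finset.mem_powersetCard.mpr ⟨Finset.subset_univ K, hK.2.1⟩
    have h2 : Bad.card ≤ m ^ k₀ := by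
      calc Bad.card ≤ (Finset.powersetCard k₀ (Finset.univ : Finset A)).card :=
            Finset.card_le_card h1
        _ = m.choose k₀ := by rw [Finset.card_powersetCard, Finset.card_univ, hm]
        _ ≤ m ^ k₀ := Nat.choose_le_pow m k₀
    exact_mod_cast h2
  have hBadsum : ∑ K ∈ Bad, ((Finset.univ.filter fun b : B => ∀ a ∈ K, Adj a b).card : ℝ) ^ t
      ≤ (m:ℝ) ^ k₀ * (β * m') ^ t := by
    calc ∑ K ∈ Bad, ((Finset.univ.filter fun b : B => ∀ a ∈ K, Adj a b).card : ℝ) ^ t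
        ≤ ∑ _K ∈ Bad, (β * (m':ℝ)) ^ t := by
          apply Finset.sum_le_sum
          intro K hK
          rw [hBad, Finset.mem_filter] at hK
          exact pow_le_pow_left₀ (by positivity) hK.2.2.le t
      _ = (Bad.card : ℝ) * (β * m') ^ t := by rw [Finset.sum_const, nsmul_eq_mul]
      _ ≤ (m:ℝ) ^ k₀ * (β * m') ^ t := by
          apply mul_le_mul_of_nonneg_right hBadcard (by positivity)
  -- total bound and choice of T
  have hcardT : (Fintype.card (Fin t → B) : ℝ) = (m':ℝ) ^ t := by
    rw [Fintype.card_fun, Fintype.card_fin, hm']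
    push_cast
    ring
  have htotal : ∑ _T : Fin t → B, (w:ℝ) ≤
      ∑ T : Fin t → B, (((W' T).card : ℝ) - ((badIn T).card : ℝ)) := by
    rw [Finset.sum_sub_distrib, hSum1, hSum2, Finset.sum_const, Finset.card_univ,
      nsmul_eq_mul, hcardT]
    have : (m':ℝ) ^ t * w ≤ (m:ℝ) * ε ^ t * (m':ℝ) ^ t - (m:ℝ) ^ k₀ * (β * m') ^ t := by
      have h1 : (m':ℝ) ^ t * w ≤ (m':ℝ) ^ t * ((m:ℝ) * ε ^ t - (m:ℝ) ^ k₀ * β ^ t) :=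
        mul_le_mul_of_nonneg_left hineq (by positivity)
      rw [mul_pow]
      nlinarith [pow_pos hm'R t]
    linarith
  obtain ⟨T, _, hT⟩ := Finset.exists_le_of_sum_le Finset.univ_nonempty htotal
  -- remove one vertex from each bad set
  have hpickex : ∀ K ∈ badIn T, K.Nonempty := by
    intro K hK
    rw [hbadIn, Finset.mem_filter, hBad, Finset.mem_filter] at hK
    exact Finset.card_pos.mp (by rw [hK.1.2.1]; exact hk₀)
  set pick : Finset A → A := fun K =>
    if h : K.Nonempty then h.choose else Classical.arbitrary A with hpick
  have hpickmem : ∀ K ∈ badIn T, pick K ∈ K := by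
    intro K hK
    rw [hpick]
    have h := hpickex K hK
    simp only [dif_pos h]
    exact h.choose_spec
  set R : Finset A := (badIn T).image pick with hR
  have hRsub : R ⊆ W' T := by
    intro a ha
    rw [hR, Finset.mem_image] at ha
    obtain ⟨K, hK, rfl⟩ := ha
    have hKsub : K ⊆ W' T := by
      rw [hbadIn, Finset.mem_filter] at hK
      exact hK.2
    exact hKsub (hpickmem K hK)
  refine ⟨W' T \ R, ?_, ?_⟩
  · rw [Finset.card_sdiff_of_subset hRsub, Nat.cast_sub (Finset.card_le_card hRsub)]
    have hRcard : (R.card : ℝ) ≤ ((badIn T).card : ℝ) := by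
      exact_mod_cast Finset.card_image_le
    linarith
  · intro K hKW hKcard
    by_contra hcon
    push_neg at hcon
    have hKBad : K ∈ Bad := by
      rw [hBad, Finset.mem_filter]
      exact ⟨Finset.mem_univ K, hKcard, hcon⟩
    have hKsub : K ⊆ W' T := hKW.trans (Finset.sdiff_subset)
    have hKbadIn : K ∈ badIn T := by
      rw [hbadIn, Finset.mem_filter]; exact ⟨hKBad, hKsub⟩
    have hpR : pick K ∈ R := by
      rw [hR]; exact Finset.mem_image_of_mem pick hKbadIn
    have hpW : pick K ∈ W' T \ R := hKW (hpickmem K hKbadIn)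
    exact (Finset.mem_sdiff.mp hpW).2 hpR
end

section
/- Any finite complete graph whose vertices and edges are colored with r colors, such that all r colors are used (on vertices or edges) and removing any single vertex destroys the use of some color, has at most 2r − 2 vertices. -/
/-- A fully-colored complete graph (vertices and edges colored with `r ≥ 2` colors)
that uses all `r` colors and is vertex-minimal with this property (removing any vertex
destroys the use of some color) has at most `2r − 2` vertices. -/
theorem stmt_2 {V : Type*} [Fintype V] [DecidableEq V] (r : ℕ) (hr : 2 ≤ r)
    (cv : V → Fin r) (ce : V → V → Fin r) (hsymm : ∀ u v : V, ce u v = ce v u)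
    (hall : ∀ c : Fin r, (∃ v : V, cv v = c) ∨ ∃ u v : V, u ≠ v ∧ ce u v = c)
    (hmin : ∀ w : V, ∃ c : Fin r,
      ¬ ((∃ v : V, v ≠ w ∧ cv v = c) ∨
         ∃ u v : V, u ≠ v ∧ u ≠ w ∧ v ≠ w ∧ ce u v = c)) :
    Fintype.card V ≤ 2 * r - 2 := by
  classical
  set f : V → Fin r := fun w => Classical.choose (hmin w) with hfdef
  have hf1 : ∀ w (v : V), v ≠ w → cv v ≠ f w := by
    intro w v hv hc
    exact Classical.choose_spec (hmin w) (Or.inl ⟨v, hv, hc⟩)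
  have hf2 : ∀ w (u v : V), u ≠ v → u ≠ w → v ≠ w → ce u v ≠ f w := by
    intro w u v h1 h2 h3 hc
    exact Classical.choose_spec (hmin w) (Or.inr ⟨u, v, h1, h2, h3, hc⟩)
  have hvx : ∀ w v : V, cv v = f w → v = w := by
    intro w v hc
    by_contra h; exact hf1 w v h hc
  set g : Fin r → ℕ := fun c => (Finset.univ.filter (fun w => f w = c)).card with hgdef
  have hg2 : ∀ c, g c ≤ 2 := by
    intro c
    by_contra h
    push_neg at h
    obtain ⟨a, b, d, ha, hb, hd, hab, had, hbd⟩ := Finset.two_lt_card_iff.mp h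
    simp only [Finset.mem_filter, Finset.mem_univ, true_and] at ha hb hd
    rcases hall c with ⟨v, hv⟩ | ⟨u, v, huv, huvc⟩
    · have h1 := hvx a v (by rw [hv, ha])
      have h2 := hvx b v (by rw [hv, hb])
      exact hab (h1 ▸ h2)
    · have key : ∀ w : V, f w = c → u = w ∨ v = w := by
        intro w hw
        by_contra h
        push_neg at h
        exact hf2 w u v huv h.1 h.2 (by rw [huvc, hw])
      rcases key a ha with h1 | h1 <;> rcases key b hb with h2 | h2 <;>
        rcases key d hd with h3 | h3 <;>
        first
          | exact hab (h1.symm.trans h2)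
          | exact had (h1.symm.trans h3)
          | exact hbd (h2.symm.trans h3)
  have hg1 : ∀ (v : V) (c : Fin r), cv v = c → g c ≤ 1 := by
    intro v c hc
    by_contra h
    push_neg at h
    obtain ⟨a, b, ha, hb, hab⟩ := Finset.one_lt_card_iff.mp h
    simp only [Finset.mem_filter, Finset.mem_univ, true_and] at ha hb
    have h1 := hvx a v (by rw [hc, ha])
    have h2 := hvx b v (by rw [hc, hb])
    exact hab (h1 ▸ h2)
  have hcard : Fintype.card V = ∑ c : Fin r, g c := by
    rw [← Finset.card_univ]
    exact Finset.card_eq_sum_card_fiberwise (fun w _ => Finset.mem_univ (f w))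
  by_cases hsmall : Fintype.card V ≤ 1
  · omega
  · push_neg at hsmall
    obtain ⟨v, v', hvv'⟩ := Fintype.exists_pair_of_one_lt_card hsmall
    by_cases hcc : cv v = cv v'
    · -- fiber of cv v is empty
      have hg0 : g (cv v) = 0 := by
        rw [hgdef]
        simp only [Finset.card_eq_zero, Finset.filter_eq_empty_iff, Finset.mem_univ]
        intro w _ hw
        have h1 := hvx w v (by rw [hw])
        have h2 := hvx w v' (by rw [← hcc, hw])
        exact hvv' (h1.trans h2.symm)
      have hsplit := Finset.add_sum_erase Finset.univ g (Finset.mem_univ (cv v))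
      have hrest : ∑ c ∈ Finset.univ.erase (cv v), g c ≤ (Finset.univ.erase (cv v)).card * 2 := by
        have := Finset.sum_le_card_nsmul (Finset.univ.erase (cv v)) g 2 (fun c _ => hg2 c)
        simpa using this
      have hec : (Finset.univ.erase (cv v)).card = r - 1 := by
        rw [Finset.card_erase_of_mem (Finset.mem_univ _)]
        simp
      omega
    · have hmem : cv v' ∈ Finset.univ.erase (cv v) := by
        simp [Ne.symm hcc]
      have hsplit := Finset.add_sum_erase Finset.univ g (Finset.mem_univ (cv v))
      have hsplit2 := Finset.add_sum_erase _ g hmem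
      have hrest : ∑ c ∈ (Finset.univ.erase (cv v)).erase (cv v'), g c ≤
          ((Finset.univ.erase (cv v)).erase (cv v')).card * 2 := by
        have := Finset.sum_le_card_nsmul ((Finset.univ.erase (cv v)).erase (cv v')) g 2
          (fun c _ => hg2 c)
        simpa using this
      have hec : ((Finset.univ.erase (cv v)).erase (cv v')).card = r - 2 := by
        rw [Finset.card_erase_of_mem hmem, Finset.card_erase_of_mem (Finset.mem_univ _)]
        simp only [Finset.card_univ, Fintype.card_fin]
        omega
      have h1 := hg1 v (cv v) rfl
      have h2 := hg1 v' (cv v') rfl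
      omega
end

section
/- There exists a 2-coloring of the edges of the complete graph on the vertex set ℕ such that every vertex has infinitely many red neighbors and infinitely many blue neighbors, yet there is no vertex v together with an infinite set S disjoint from {v} such that all edges inside S have one color and all edges from v to S have the other color. -/
/-- There is a red/blue coloring of the complete graph on `ℕ` in which every vertex has
infinitely many red neighbors and infinitely many blue neighbors, yet there is no vertex
`v` and infinite set `S` (with `v ∉ S`) such that all edges inside `S` have one color
and all edges from `v` to `S` have the other color (no `M_{1,ω}`). -/
theorem stmt_7 :
    ∃ red : ℕ → ℕ → Bool,
      (∀ u v : ℕ, red u v = red v u) ∧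
      (∀ v : ℕ, {u : ℕ | u ≠ v ∧ red v u = true}.Infinite) ∧
      (∀ v : ℕ, {u : ℕ | u ≠ v ∧ red v u = false}.Infinite) ∧
      ¬ ∃ (v : ℕ) (S : Set ℕ), S.Infinite ∧ v ∉ S ∧
        (((∀ a ∈ S, ∀ b ∈ S, a ≠ b → red a b = true) ∧ (∀ a ∈ S, red v a = false)) ∨
         ((∀ a ∈ S, ∀ b ∈ S, a ≠ b → red a b = false) ∧ (∀ a ∈ S, red v a = true))) := by
  refine ⟨fun u v => decide (Even (max u v)), ?_, ?_, ?_, ?_⟩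
  · intro u v; simp [max_comm]
  · intro v
    apply Set.infinite_of_injective_forall_mem (f := fun n => 2 * (n + v + 1))
      (by intro a b h; simp only at h; omega)
    intro n
    have hm : max v (2 * (n + v + 1)) = 2 * (n + v + 1) := max_eq_right (by omega)
    refine ⟨by omega, ?_⟩
    simp only [hm, decide_eq_true_iff]
    exact ⟨n + v + 1, by ring⟩
  · intro v
    apply Set.infinite_of_injective_forall_mem (f := fun n => 2 * (n + v) + 1)
      (by intro a b h; simp only at h; omega)
    intro n
    have hm : max v (2 * (n + v) + 1) = 2 * (n + v) + 1 := max_eq_right (by omega)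
    refine ⟨by omega, ?_⟩
    simp only [hm, decide_eq_false_iff_not]
    simp [Nat.even_iff]
  · rintro ⟨v, S, hS, hvS, ⟨hhom, hstar⟩ | ⟨hhom, hstar⟩⟩ <;>
    · obtain ⟨a, haS⟩ := hS.nonempty
      obtain ⟨b, hbS, hb⟩ := hS.exists_gt (max v a)
      have hab : a ≠ b := by omega
      have h1 := hhom a haS b hbS hab
      have h2 := hstar b hbS
      have hm1 : max a b = b := max_eq_right (by omega)
      have hm2 : max v b = b := max_eq_right (by omega)
      simp only [hm1, hm2, decide_eq_true_iff, decide_eq_false_iff_not] at h1 h2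
      tauto
end

section
/- Consider the vertex set ℕ × {0,1}. Color edges inside ℕ × {1} blue, edges inside ℕ × {0} red, and for i in the left copy ℕ × {0} and j in the right copy ℕ × {1}, color edge (i,0)(j,1) blue if i < j and red otherwise. Then every vertex has infinite red degree and infinite blue degree, and there is no infinite set S and vertex v ∉ S with [S]² red and all edges v–S blue, nor with [S]² blue and all edges v–S red; i.e., this coloring contains no M_{1,ω}. -/
/-- The concrete coloring on `ℕ × Bool`: edges inside the left copy `ℕ × {false}` are
red, edges inside the right copy `ℕ × {true}` are blue, and a cross edge between left
vertex `i` and right vertex `j` is blue if `i < j` and red otherwise. -/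
def paperRed : ℕ × Bool → ℕ × Bool → Bool
  | (_, false), (_, false) => true
  | (_, true), (_, true) => false
  | (i, false), (j, true) => decide (j ≤ i)
  | (i, true), (j, false) => decide (i ≤ j)

/-- If `S` is infinite and the vertices of `S` with second component `b` form a
subsingleton, then for any `n` there is a vertex in `S` with second component `!b`
and first component `> n`. -/
lemma paperAux {S : Set (ℕ × Bool)} (hS : S.Infinite) (b : Bool)
    (hsub : {x ∈ S | x.2 = b}.Subsingleton) (n : ℕ) :
    ∃ j, n < j ∧ (j, !b) ∈ S := by
  have htfin : {x ∈ S | x.2 = b}.Finite := hsub.finite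
  have hSf : (S \ {x ∈ S | x.2 = b}).Infinite := hS.diff htfin
  have hEq : S \ {x ∈ S | x.2 = b} = {x ∈ S | x.2 = !b} := by
    ext ⟨i, c⟩
    simp only [Set.mem_diff, Set.mem_setOf_eq]
    cases b <;> cases c <;> simp
  rw [hEq] at hSf
  have hinj : Set.InjOn Prod.fst {x ∈ S | x.2 = !b} := by
    rintro ⟨i, c⟩ ⟨_, hc⟩ ⟨j, d⟩ ⟨_, hd⟩ h
    simp only at h hc hd
    simp [h, hc, hd]
  have himg : (Prod.fst '' {x ∈ S | x.2 = !b}).Infinite := hSf.image hinj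
  obtain ⟨j, hj, hnj⟩ := himg.exists_gt n
  obtain ⟨⟨i, c⟩, ⟨hmem, hc⟩, rfl⟩ := hj
  simp only at hc
  subst hc
  exact ⟨i, hnj, hmem⟩

/-- For the coloring `paperRed` of the complete graph on `ℕ × {0,1}`, every vertex has
infinite red degree and infinite blue degree, and the coloring contains no `M_{1,ω}`:
there is no vertex `v` and infinite set `S` with `v ∉ S`, all edges inside `S` of one
color, and all edges from `v` to `S` of the other color. -/
theorem stmt_8 :
    (∀ v : ℕ × Bool, {u : ℕ × Bool | u ≠ v ∧ paperRed v u = true}.Infinite) ∧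
    (∀ v : ℕ × Bool, {u : ℕ × Bool | u ≠ v ∧ paperRed v u = false}.Infinite) ∧
    ¬ ∃ (v : ℕ × Bool) (S : Set (ℕ × Bool)), S.Infinite ∧ v ∉ S ∧
      (((∀ a ∈ S, ∀ b ∈ S, a ≠ b → paperRed a b = true) ∧
          (∀ a ∈ S, paperRed v a = false)) ∨
       ((∀ a ∈ S, ∀ b ∈ S, a ≠ b → paperRed a b = false) ∧
          (∀ a ∈ S, paperRed v a = true))) := by
  refine ⟨?_, ?_, ?_⟩
  · rintro ⟨n, _ | _⟩
    · exact Set.infinite_of_injective_forall_mem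
        (f := fun m : ℕ => (m + n + 1, false))
        (fun a b h => by simpa using h)
        (fun m => ⟨by simp [Prod.ext_iff]; omega, by simp [paperRed]⟩)
    · exact Set.infinite_of_injective_forall_mem
        (f := fun m : ℕ => (n + m, false))
        (fun a b h => by simpa using h)
        (fun m => ⟨by simp [Prod.ext_iff], by simp [paperRed]⟩)
  · rintro ⟨n, _ | _⟩
    · exact Set.infinite_of_injective_forall_mem
        (f := fun m : ℕ => (n + m + 1, true))
        (fun a b h => by simpa using h)
        (fun m => ⟨by simp [Prod.ext_iff], by simp [paperRed]⟩)
    · exact Set.infinite_of_injective_forall_mem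
        (f := fun m : ℕ => (m + n + 1, true))
        (fun a b h => by simpa using h)
        (fun m => ⟨by simp [Prod.ext_iff]; omega, by simp [paperRed]⟩)
  · rintro ⟨⟨n, c⟩, S, hSinf, hvS, ⟨hhom, hstar⟩ | ⟨hhom, hstar⟩⟩
    · -- S red-homogeneous, v–S blue: right part of S is a subsingleton
      have hsub : {x ∈ S | x.2 = true}.Subsingleton := by
        rintro ⟨i, ci⟩ ⟨hi, hci⟩ ⟨j, cj⟩ ⟨hj, hcj⟩
        simp only at hci hcj; subst hci; subst hcj
        by_contra hne
        have := hhom _ hi _ hj hne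
        simp [paperRed] at this
      obtain ⟨j, hnj, hjS⟩ := paperAux hSinf true hsub n
      have := hstar _ hjS
      cases c <;> simp [paperRed] at this <;> omega
    · have hsub : {x ∈ S | x.2 = false}.Subsingleton := by
        rintro ⟨i, ci⟩ ⟨hi, hci⟩ ⟨j, cj⟩ ⟨hj, hcj⟩
        simp only at hci hcj; subst hci; subst hcj
        by_contra hne
        have := hhom _ hi _ hj hne
        simp [paperRed] at this
      obtain ⟨j, hnj, hjS⟩ := paperAux hSinf false hsub n
      have := hstar _ hjS
      cases c <;> simp [paperRed] at this <;> omega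
end

section
/- Let the edges of K_n be 2-colored with both color classes nonempty and the red class no larger than the blue class, with the red class having exactly ε·binom(n,2) edges. If every vertex has red degree at least (ε − c)·n for c = √(1−ε) − (1−ε), then there exist two vertices x ≠ y whose red neighborhood of x and blue neighborhood of y intersect in at least (ε−c)(1−ε+c)·n + o(n) vertices. -/
open Finset

section StmtAux

variable {n : ℕ}

private def Ar (red : Fin n → Fin n → Bool) (x : Fin n) : Finset (Fin n) :=
  Finset.univ.filter fun u => u ≠ x ∧ red x u

private def Bb (red : Fin n → Fin n → Bool) (y : Fin n) : Finset (Fin n) :=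
  Finset.univ.filter fun u => u ≠ y ∧ ¬ red y u

private lemma Ar_card_add_Bb_card (red : Fin n → Fin n → Bool) (x : Fin n) :
    (Ar red x).card + (Bb red x).card = n - 1 := by
  have hdisj : Disjoint (Ar red x) (Bb red x) := by
    rw [Finset.disjoint_left]
    intro a ha hb
    simp only [Ar, Bb, mem_filter] at ha hb
    exact hb.2.2 ha.2.2
  rw [← Finset.card_union_of_disjoint hdisj]
  have hu : Ar red x ∪ Bb red x = Finset.univ.erase x := by
    ext a
    simp only [Ar, Bb, mem_union, mem_filter, mem_erase, mem_univ, true_and, and_true]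
    tauto
  rw [hu, Finset.card_erase_of_mem (Finset.mem_univ x), Finset.card_univ, Fintype.card_fin]

private lemma Ar_inter_Bb_self (red : Fin n → Fin n → Bool) (x : Fin n) :
    Ar red x ∩ Bb red x = ∅ := by
  ext a
  simp only [Ar, Bb, mem_inter, mem_filter, mem_univ, true_and, notMem_empty, iff_false]
  tauto

private lemma lower_bound (red : Fin n → Fin n → Bool) (x y : Fin n) :
    (Ar red x).card ≤ (Ar red x ∩ Bb red y).card + ((Ar red y).card + 1) := by
  have hsub : Ar red x ⊆ (Ar red x ∩ Bb red y) ∪ insert y (Ar red y) := by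
    intro a ha
    by_cases h1 : a = y
    · exact mem_union_right _ (by simp [h1])
    by_cases h2 : a ∈ Ar red y
    · exact mem_union_right _ (mem_insert_of_mem h2)
    · refine mem_union_left _ (mem_inter.2 ⟨ha, ?_⟩)
      simp only [Ar, mem_filter, mem_univ, true_and, not_and] at h2
      simp only [Bb, mem_filter, mem_univ, true_and]
      exact ⟨h1, h2 h1⟩
  calc (Ar red x).card ≤ ((Ar red x ∩ Bb red y) ∪ insert y (Ar red y)).card :=
        Finset.card_le_card hsub
    _ ≤ (Ar red x ∩ Bb red y).card + (insert y (Ar red y)).card := Finset.card_union_le _ _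
    _ ≤ (Ar red x ∩ Bb red y).card + ((Ar red y).card + 1) := by
        gcongr; exact Finset.card_insert_le _ _

private lemma handshake (red : Fin n → Fin n → Bool) (hsym : ∀ u v, red u v = red v u) :
    ∑ x, (Ar red x).card
      = 2 * (Finset.univ.filter fun p : Fin n × Fin n => p.1 < p.2 ∧ red p.1 p.2).card := by
  have hE : (Finset.univ.filter fun p : Fin n × Fin n => p.1 < p.2 ∧ red p.1 p.2).card
      = ∑ x : Fin n, ∑ u : Fin n, if x < u ∧ red x u then 1 else 0 := by
    rw [Finset.card_filter, Fintype.sum_prod_type]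
  have hA : ∀ x, (Ar red x).card = ∑ u : Fin n, if u ≠ x ∧ red x u then 1 else 0 := by
    intro x; rw [Ar, Finset.card_filter]
  have key : ∀ x u : Fin n, (if u ≠ x ∧ red x u then (1:ℕ) else 0)
      = (if x < u ∧ red x u then 1 else 0) + (if u < x ∧ red x u then 1 else 0) := by
    intro x u
    rcases lt_trichotomy x u with h | h | h
    · simp [h, h.ne', not_lt_of_gt h]
    · simp [h]
    · simp [h, h.ne, not_lt_of_gt h]
  have hswap : ∑ x : Fin n, ∑ u : Fin n, (if u < x ∧ red x u then (1:ℕ) else 0)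
      = ∑ x : Fin n, ∑ u : Fin n, if x < u ∧ red x u then 1 else 0 := by
    rw [Finset.sum_comm]
    refine Finset.sum_congr rfl fun a _ => Finset.sum_congr rfl fun b _ => ?_
    rw [hsym b a]
  calc ∑ x, (Ar red x).card
      = ∑ x : Fin n, ∑ u : Fin n, ((if x < u ∧ red x u then (1:ℕ) else 0)
          + (if u < x ∧ red x u then 1 else 0)) := by
        simp only [hA, key]
    _ = 2 * (Finset.univ.filter fun p : Fin n × Fin n => p.1 < p.2 ∧ red p.1 p.2).card := by
        rw [hE]
        simp only [Finset.sum_add_distrib, hswap]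
        ring

private lemma doublecount (red : Fin n → Fin n → Bool) (hsym : ∀ u v, red u v = red v u) :
    ∑ p : Fin n × Fin n, (Ar red p.1 ∩ Bb red p.2).card
      = ∑ u, (Ar red u).card * (Bb red u).card := by
  have hcard : ∀ x y : Fin n, (Ar red x ∩ Bb red y).card
      = ∑ u : Fin n, (if u ≠ x ∧ red x u then (1:ℕ) else 0)
          * (if u ≠ y ∧ ¬ red y u then 1 else 0) := by
    intro x y
    have h : Ar red x ∩ Bb red y
        = Finset.univ.filter fun u => (u ≠ x ∧ red x u) ∧ (u ≠ y ∧ ¬ red y u) := by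
      ext a; simp [Ar, Bb, and_assoc]
    rw [h, Finset.card_filter]
    refine Finset.sum_congr rfl fun u _ => ?_
    by_cases h1 : u ≠ x ∧ red x u <;> by_cases h2 : u ≠ y ∧ (¬ red y u : Prop) <;>
      simp [h1, h2]
  have hcol : ∀ u : Fin n, ∑ x : Fin n, (if u ≠ x ∧ red x u then (1:ℕ) else 0)
      = (Ar red u).card := by
    intro u
    rw [Ar, Finset.card_filter]
    refine Finset.sum_congr rfl fun x _ => ?_
    have h1 : (u ≠ x ∧ red x u) ↔ (x ≠ u ∧ red u x) := by rw [hsym u x, ne_comm]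
    simp only [h1]
  have hcol2 : ∀ u : Fin n, ∑ y : Fin n, (if u ≠ y ∧ ¬ red y u then (1:ℕ) else 0)
      = (Bb red u).card := by
    intro u
    rw [Bb, Finset.card_filter]
    refine Finset.sum_congr rfl fun y _ => ?_
    have h1 : (u ≠ y ∧ ¬ red y u) ↔ (y ≠ u ∧ ¬ red u y) := by rw [hsym u y, ne_comm]
    simp only [h1]
  calc ∑ p : Fin n × Fin n, (Ar red p.1 ∩ Bb red p.2).card
      = ∑ x : Fin n, ∑ y : Fin n, ∑ u : Fin n,
          (if u ≠ x ∧ red x u then (1:ℕ) else 0) * (if u ≠ y ∧ ¬ red y u then 1 else 0) := by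
        rw [Fintype.sum_prod_type]
        exact Finset.sum_congr rfl fun x _ => Finset.sum_congr rfl fun y _ => hcard x y
    _ = ∑ x : Fin n, ∑ u : Fin n,
          (if u ≠ x ∧ red x u then (1:ℕ) else 0) * (Bb red u).card := by
        refine Finset.sum_congr rfl fun x _ => ?_
        rw [Finset.sum_comm]
        refine Finset.sum_congr rfl fun u _ => ?_
        rw [← Finset.mul_sum, hcol2]
    _ = ∑ u : Fin n, (Ar red u).card * (Bb red u).card := by
        rw [Finset.sum_comm]
        refine Finset.sum_congr rfl fun u _ => ?_
        rw [← Finset.sum_mul, hcol]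

end StmtAux


set_option maxHeartbeats 1000000 in
/-- Suppose `K_n` is red/blue colored, both classes nonempty, the red class no larger
than the blue class and of size exactly `ε·binom(n,2)`, and every vertex has red degree
at least `(ε − c)·n` where `c = √(1−ε) − (1−ε)`.  Then there exist `x ≠ y` such that the
red neighborhood of `x` and the blue neighborhood of `y` intersect in at least
`(ε−c)(1−ε+c)·n − C` vertices, where `C` depends only on `ε`. -/
theorem stmt_11 (ε : ℝ) (hε0 : 0 < ε) (hε1 : ε ≤ 1 / 2) :
    ∃ C : ℝ, ∀ (n : ℕ) (red : Fin n → Fin n → Bool),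
      (∀ u v : Fin n, red u v = red v u) →
      -- both color classes nonempty
      (∃ u v : Fin n, u ≠ v ∧ red u v = true) →
      (∃ u v : Fin n, u ≠ v ∧ red u v = false) →
      -- red class exactly ε·binom(n,2) edges and no larger than the blue class
      (((Finset.univ.filter fun p : Fin n × Fin n => p.1 < p.2 ∧ red p.1 p.2).card : ℝ)
          = ε * (n.choose 2 : ℝ)) →
      ((Finset.univ.filter fun p : Fin n × Fin n => p.1 < p.2 ∧ red p.1 p.2).card ≤
        (Finset.univ.filter fun p : Fin n × Fin n => p.1 < p.2 ∧ ¬ red p.1 p.2).card) →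
      -- minimum red degree condition, with c = √(1−ε) − (1−ε)
      (∀ v : Fin n, (ε - (Real.sqrt (1 - ε) - (1 - ε))) * n ≤
        ((Finset.univ.filter fun u => u ≠ v ∧ red v u).card : ℝ)) →
      ∃ x y : Fin n, x ≠ y ∧
        (ε - (Real.sqrt (1 - ε) - (1 - ε))) *
            (1 - ε + (Real.sqrt (1 - ε) - (1 - ε))) * n - C ≤
          (((Finset.univ.filter fun u => u ≠ x ∧ red x u) ∩
            (Finset.univ.filter fun u => u ≠ y ∧ ¬ red y u)).card : ℝ) := by
  refine ⟨3, ?_⟩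
  intro n red hsym hredne hbluene hcount hle hmin
  obtain ⟨u₀, v₀, huv, hredge⟩ := hredne
  set t := Real.sqrt (1 - ε) with htdef
  have ht2 : t ^ 2 = 1 - ε := Real.sq_sqrt (by linarith)
  have ht0 : 0 ≤ t := Real.sqrt_nonneg _
  have ht1 : t ≤ 1 := by nlinarith [sq_nonneg (t - 1)]
  have h2t : 1 ≤ 2 * t ^ 2 := by rw [ht2]; linarith
  have hcoef : (ε - (t - (1 - ε))) * (1 - ε + (t - (1 - ε))) = (1 - t) * t := by ring
  suffices h : ∃ x y : Fin n, x ≠ y ∧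
      (1 - t) * t * (n : ℝ) - 3 ≤ ((Ar red x ∩ Bb red y).card : ℝ) by
    obtain ⟨x, y, hxy, hineq⟩ := h
    refine ⟨x, y, hxy, ?_⟩
    rw [hcoef]
    exact hineq
  by_cases hs : (1 - t) * t * (n : ℝ) ≤ 3
  · refine ⟨u₀, v₀, huv, ?_⟩
    have h0 : (0:ℝ) ≤ ((Ar red u₀ ∩ Bb red v₀).card : ℝ) := Nat.cast_nonneg _
    linarith
  push_neg at hs
  have hn2 : 2 ≤ n := by
    have h := Fintype.one_lt_card_iff_nontrivial.mpr ⟨u₀, v₀, huv⟩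
    rw [Fintype.card_fin] at h
    omega
  have hnR : (2 : ℝ) ≤ (n : ℝ) := by exact_mod_cast hn2
  have hn0 : (0 : ℝ) ≤ (n : ℝ) := by linarith
  -- sum of red degrees
  have hsum_d : ∑ x : Fin n, ((Ar red x).card : ℝ) = (n : ℝ) * ((1 - t ^ 2) * ((n : ℝ) - 1)) := by
    have h := handshake red hsym
    have h2 : (∑ x : Fin n, ((Ar red x).card : ℝ))
        = 2 * ((Finset.univ.filter fun p : Fin n × Fin n => p.1 < p.2 ∧ red p.1 p.2).card : ℝ) := by
      exact_mod_cast congrArg (Nat.cast : ℕ → ℝ) h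
    rw [h2, hcount, Nat.cast_choose_two, ht2]
    ring
  have hBcast : ∀ u : Fin n, ((Bb red u).card : ℝ) = (n : ℝ) - 1 - ((Ar red u).card : ℝ) := by
    intro u
    have h := Ar_card_add_Bb_card red u
    have h2 : ((Ar red u).card : ℝ) + ((Bb red u).card : ℝ) = (n : ℝ) - 1 := by
      rw [← Nat.cast_add, h, Nat.cast_sub (by omega)]
      simp
    linarith
  by_cases hcase : ∃ x y : Fin n,
      ((Ar red y).card : ℝ) + ((1 - t) * t * (n : ℝ) - 2) ≤ ((Ar red x).card : ℝ)
  · obtain ⟨x, y, hxy'⟩ := hcase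
    have hxyne : x ≠ y := by
      rintro rfl
      linarith
    have hlb : ((Ar red x).card : ℝ)
        ≤ ((Ar red x ∩ Bb red y).card : ℝ) + (((Ar red y).card : ℝ) + 1) := by
      exact_mod_cast lower_bound red x y
    exact ⟨x, y, hxyne, by linarith⟩
  · push_neg at hcase
    -- deviation bound
    have hdev : ∀ u : Fin n,
        (((Ar red u).card : ℝ) - (1 - t ^ 2) * ((n : ℝ) - 1)) ^ 2
          ≤ ((1 - t) * t * (n : ℝ) - 2) ^ 2 := by
      intro u
      have hup : (n : ℝ) * ((Ar red u).card : ℝ)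
          ≤ (n : ℝ) * ((1 - t ^ 2) * ((n : ℝ) - 1)) + (n : ℝ) * ((1 - t) * t * (n : ℝ) - 2) := by
        have h := Finset.sum_le_sum (s := (Finset.univ : Finset (Fin n)))
          (f := fun _ => ((Ar red u).card : ℝ))
          (g := fun v => ((Ar red v).card : ℝ) + ((1 - t) * t * (n : ℝ) - 2))
          (fun v _ => (hcase u v).le)
        rw [Finset.sum_add_distrib, hsum_d, Finset.sum_const, Finset.sum_const, card_univ,
          Fintype.card_fin, nsmul_eq_mul, nsmul_eq_mul] at h
        linarith
      have hdn : (n : ℝ) * ((1 - t ^ 2) * ((n : ℝ) - 1))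
          ≤ (n : ℝ) * ((Ar red u).card : ℝ) + (n : ℝ) * ((1 - t) * t * (n : ℝ) - 2) := by
        have h := Finset.sum_le_sum (s := (Finset.univ : Finset (Fin n)))
          (f := fun v => ((Ar red v).card : ℝ))
          (g := fun _ => ((Ar red u).card : ℝ) + ((1 - t) * t * (n : ℝ) - 2))
          (fun v _ => (hcase v u).le)
        rw [Finset.sum_add_distrib, hsum_d, Finset.sum_const, Finset.sum_const, card_univ,
          Fintype.card_fin, nsmul_eq_mul, nsmul_eq_mul] at h
        linarith
      have hup' : ((Ar red u).card : ℝ) - (1 - t ^ 2) * ((n : ℝ) - 1)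
          ≤ (1 - t) * t * (n : ℝ) - 2 := by nlinarith
      have hdn' : -((1 - t) * t * (n : ℝ) - 2)
          ≤ ((Ar red u).card : ℝ) - (1 - t ^ 2) * ((n : ℝ) - 1) := by nlinarith
      exact sq_le_sq' hdn' hup'
    -- sum identity
    have h0 : ∑ u : Fin n, (((Ar red u).card : ℝ) - (1 - t ^ 2) * ((n : ℝ) - 1)) = 0 := by
      rw [Finset.sum_sub_distrib, hsum_d, Finset.sum_const, card_univ, Fintype.card_fin,
        nsmul_eq_mul]
      ring
    have hsum2 : ∑ u : Fin n,
        ((1 - t ^ 2) * ((n : ℝ) - 1) * ((n : ℝ) - 1 - (1 - t ^ 2) * ((n : ℝ) - 1))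
          - ((1 - t) * t * (n : ℝ) - 2) ^ 2
          + (((Ar red u).card : ℝ) - (1 - t ^ 2) * ((n : ℝ) - 1))
            * ((n : ℝ) - 1 - 2 * ((1 - t ^ 2) * ((n : ℝ) - 1))))
        = (n : ℝ) * ((1 - t ^ 2) * ((n : ℝ) - 1) * ((n : ℝ) - 1 - (1 - t ^ 2) * ((n : ℝ) - 1))
            - ((1 - t) * t * (n : ℝ) - 2) ^ 2) := by
      rw [Finset.sum_add_distrib, ← Finset.sum_mul, h0, Finset.sum_const, card_univ,
        Fintype.card_fin, nsmul_eq_mul]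
      ring
    have hchain : (n : ℝ) * ((1 - t ^ 2) * ((n : ℝ) - 1)
          * ((n : ℝ) - 1 - (1 - t ^ 2) * ((n : ℝ) - 1)) - ((1 - t) * t * (n : ℝ) - 2) ^ 2)
        ≤ ∑ u : Fin n, ((Ar red u).card : ℝ) * ((Bb red u).card : ℝ) := by
      rw [← hsum2]
      refine Finset.sum_le_sum fun u _ => ?_
      rw [hBcast u]
      nlinarith [hdev u]
    -- the big polynomial inequality
    have hq : t ^ 2 * (1 - t ^ 2) ≤ 1 / 4 := by nlinarith [sq_nonneg (2 * t ^ 2 - 1)]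
    have hA1 : (0:ℝ) ≤ (t * (1 - t) * (2 * t ^ 2 - 1)) * ((n:ℝ) * (n:ℝ)) :=
      mul_nonneg (mul_nonneg (mul_nonneg ht0 (by linarith)) (by linarith))
        (mul_nonneg hn0 hn0)
    have hA2 : (0:ℝ) ≤ (t * (1 - t)) * (n:ℝ) :=
      mul_nonneg (mul_nonneg ht0 (by linarith)) hn0
    have hA3 : (0:ℝ) ≤ (1 / 4 - t ^ 2 * (1 - t ^ 2)) * (n:ℝ) :=
      mul_nonneg (by linarith) hn0
    have hA4 : (0:ℝ) ≤ t ^ 2 * (1 - t ^ 2) :=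
      mul_nonneg (sq_nonneg t) (by nlinarith)
    have hF0 : t * (1 - t) * (n:ℝ) ^ 2 - 3 * (n:ℝ)
        - (1 - t ^ 2) * t ^ 2 * ((n:ℝ) - 1) ^ 2 + ((1 - t) * t * (n:ℝ) - 2) ^ 2 ≤ 0 := by
      nlinarith [hA1, hA2, hA3, hA4, hnR]
    have hF : (n : ℝ) * (n : ℝ) * ((1 - t) * t * (n : ℝ) - 3)
        ≤ (n : ℝ) * ((1 - t ^ 2) * ((n : ℝ) - 1)
          * ((n : ℝ) - 1 - (1 - t ^ 2) * ((n : ℝ) - 1)) - ((1 - t) * t * (n : ℝ) - 2) ^ 2) := by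
      nlinarith [mul_nonneg hn0 (by linarith [hF0] : (0:ℝ) ≤
        -(t * (1 - t) * (n:ℝ) ^ 2 - 3 * (n:ℝ)
          - (1 - t ^ 2) * t ^ 2 * ((n:ℝ) - 1) ^ 2 + ((1 - t) * t * (n:ℝ) - 2) ^ 2))]
    -- cast double count
    have hdcR : ∑ p : Fin n × Fin n, ((Ar red p.1 ∩ Bb red p.2).card : ℝ)
        = ∑ u : Fin n, ((Ar red u).card : ℝ) * ((Bb red u).card : ℝ) := by
      exact_mod_cast congrArg (Nat.cast : ℕ → ℝ) (doublecount red hsym)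
    have hTsum : ∑ _p : Fin n × Fin n, ((1 - t) * t * (n : ℝ) - 3)
        ≤ ∑ p : Fin n × Fin n, ((Ar red p.1 ∩ Bb red p.2).card : ℝ) := by
      rw [Finset.sum_const, card_univ, hdcR]
      have hcardp : Fintype.card (Fin n × Fin n) = n * n := by simp
      rw [hcardp, nsmul_eq_mul]
      push_cast
      calc ((n : ℝ) * (n : ℝ)) * ((1 - t) * t * (n : ℝ) - 3)
          ≤ (n : ℝ) * ((1 - t ^ 2) * ((n : ℝ) - 1)
            * ((n : ℝ) - 1 - (1 - t ^ 2) * ((n : ℝ) - 1))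
            - ((1 - t) * t * (n : ℝ) - 2) ^ 2) := by linarith [hF]
        _ ≤ ∑ u : Fin n, ((Ar red u).card : ℝ) * ((Bb red u).card : ℝ) := hchain
    obtain ⟨p, -, hp⟩ := Finset.exists_le_of_sum_le ⟨(u₀, v₀), Finset.mem_univ _⟩ hTsum
    refine ⟨p.1, p.2, ?_, hp⟩
    intro hpe
    rw [show p.1 = p.2 from hpe, Ar_inter_Bb_self red p.2] at hp
    simp only [Finset.card_empty, Nat.cast_zero] at hp
    linarith
end

section
/- Let a complete graph K_n have an r-edge-coloring, r ≥ 2, and let A₁,…,A_t be disjoint vertex subsets each of size n₀. Suppose for some function g we know: for any r-colored complete graph on m vertices there is a monochromatic clique of size at least (1/(4r))·log_r m. Then (by induction using dependent random choice) for n₀ sufficiently large depending on r and t, there exist subsets X_i ⊆ A_i of size ⌈(1/(2^{t+1} r))·log_r n₀⌉ such that each X_i is a monochromatic clique and the complete bipartite graph between X_i and X_j is monochromatic for every i ≠ j. -/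
/-!
Blocks are handled one at a time. In the first block `A₀`, dependent random choice against each
later block `Aⱼ`, with `s = c k` random vertices of `Aⱼ`, finds a subset `P ⊆ A₀`, still of size
`r^(r k)`, in which every `k`-set has a common neighbourhood of one colour `cⱼ` covering an
`r^(-s)` fraction of `Aⱼ`. The greedy Ramsey argument gives a monochromatic `k`-clique `X₀ ⊆ P`;
replacing each `Aⱼ` by the `cⱼ`-coloured common neighbourhood of `X₀` and recursing produces the
remaining cliques. Each dependent random choice step costs `A₀` a factor `2 r^s ≤ r^(s+1)`, and
each recursion step costs the later blocks a factor `r^s`. With `k = ⌈log_r n₀ / (2^(t+1) r)⌉`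
and `c = 2^(⌊t/2⌋+1) r` these losses fit into `n₀`, while `c² ≥ 2^(t+2) r` makes `r^(s(s-1))`
exceed `n₀^(k-1)`, which bounds the bad `k`-sets dependent random choice has to avoid.
-/

open Finset Fintype

variable {V α : Type*}

def IsMonoClique (χ : V → V → α) (c : α) (X : Finset V) : Prop :=
  ∀ u ∈ X, ∀ v ∈ X, u ≠ v → χ u v = c

def IsMonoBetween (χ : V → V → α) (c : α) (X Y : Finset V) : Prop :=
  ∀ u ∈ X, ∀ v ∈ Y, χ u v = c

theorem IsMonoClique.insert [DecidableEq V] {χ : V → V → α} (hχ : ∀ u v, χ u v = χ v u)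
    {c : α} {X : Finset V} {v : V} (hX : IsMonoClique χ c X) (hv : ∀ w ∈ X, χ v w = c) :
    IsMonoClique χ c (insert v X) := by
  intro u hu w hw huw
  rcases mem_insert.1 hu with rfl | huX <;> rcases mem_insert.1 hw with rfl | hwX
  · exact absurd rfl huw
  · exact hv w hwX
  · exact (hχ _ _).trans (hv u huX)
  · exact hX u huX w hwX huw

theorem IsMonoBetween.symm {χ : V → V → α} (hχ : ∀ u v, χ u v = χ v u) {c : α}
    {X Y : Finset V} (h : IsMonoBetween χ c X Y) : IsMonoBetween χ c Y X :=
  fun u hu v hv => (hχ u v).trans (h v hv u hu)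

theorem exists_pow_le_card_filter_erase [DecidableEq V] [Fintype α] [DecidableEq α]
    (hα : 2 ≤ card α) (χ : V → V → α) {P : Finset V} {v : V} (hv : v ∈ P) {M : ℕ}
    (hP : card α ^ (M + 1) ≤ #P) : ∃ c, card α ^ M ≤ #{w ∈ P.erase v | χ v w = c} := by
  obtain ⟨c, -, hc⟩ := exists_lt_card_fiber_of_mul_lt_card_of_maps_to (s := P.erase v)
    (t := univ) (f := χ v) (n := card α ^ M - 1) (fun _ _ => mem_univ _) <| by
      have hpow : 1 ≤ card α ^ M := Nat.one_le_pow _ _ (by omega)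
      have : card α * (card α ^ M - 1) + card α = card α ^ (M + 1) := by
        rw [Nat.mul_sub, mul_one, pow_succ', Nat.sub_add_cancel (Nat.le_mul_of_pos_right _ hpow)]
      rw [card_univ, card_erase_of_mem hv]
      omega
  exact ⟨c, by omega⟩

theorem exists_isMonoClique_of_pow_sum_le [DecidableEq V] [Fintype α] [DecidableEq α]
    {χ : V → V → α} (hχ : ∀ u v, χ u v = χ v u) (hα : 2 ≤ card α) (M : ℕ) :
    ∀ κ : α → ℕ, ∑ c, κ c = M → ∀ P : Finset V, card α ^ M ≤ #P →
      ∃ c, ∃ X ⊆ P, #X = κ c ∧ IsMonoClique χ c X := by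
  induction M with
  | zero =>
    intro κ hκ P hP
    obtain ⟨v, -⟩ := card_pos.1 (by simpa using hP)
    refine ⟨χ v v, ∅, empty_subset _, ?_, by simp [IsMonoClique]⟩
    simp [(sum_eq_zero_iff.1 hκ) (χ v v) (mem_univ _)]
  | succ M ih =>
    intro κ hκ P hP
    by_cases hκ0 : ∃ c, κ c = 0
    · obtain ⟨c, hc⟩ := hκ0
      exact ⟨c, ∅, empty_subset _, by simp [hc], by simp [IsMonoClique]⟩
    push Not at hκ0
    obtain ⟨v, hv⟩ : P.Nonempty := card_pos.1 ((pow_pos (by omega) _).trans_le hP)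
    obtain ⟨c, hc⟩ := exists_pow_le_card_filter_erase hα χ hv hP
    set Q := {w ∈ P.erase v | χ v w = c}
    have hQP : Q ⊆ P := (filter_subset _ _).trans (erase_subset _ _)
    have hκ' : ∑ c', Function.update κ c (κ c - 1) c' = M := by
      rw [sum_update_of_mem (mem_univ c), sdiff_singleton_eq_erase]
      have := add_sum_erase univ κ (mem_univ c)
      have := hκ0 c
      omega
    obtain ⟨c', X, hXQ, hXcard, hX⟩ := ih _ hκ' Q hc
    by_cases hc' : c' = c
    · subst hc'
      have hvX : v ∉ X := fun h => by simpa [Q] using hXQ h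
      refine ⟨c', insert v X, insert_subset hv (hXQ.trans hQP), ?_,
        hX.insert hχ fun w hw => (mem_filter.1 (hXQ hw)).2⟩
      rw [card_insert_of_notMem hvX, hXcard, Function.update_self]
      have := hκ0 c'
      omega
    · exact ⟨c', X, hXQ.trans hQP, by rw [hXcard, Function.update_of_ne hc'], hX⟩

theorem exists_isMonoClique_of_pow_le [DecidableEq V] [Fintype α] [DecidableEq α]
    {χ : V → V → α} (hχ : ∀ u v, χ u v = χ v u) (hα : 2 ≤ card α) {k : ℕ} {P : Finset V}
    (hP : card α ^ (card α * k) ≤ #P) : ∃ c, ∃ X ⊆ P, #X = k ∧ IsMonoClique χ c X :=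
  exists_isMonoClique_of_pow_sum_le hχ hα _ (fun _ => k) (by simp) P hP

theorem card_mul_pow_le_pow_mul_sum_pow {ι : Type*} {s : Finset ι} {f : ι → ℕ} {a b : ℕ}
    (h : #s * a ≤ b * ∑ i ∈ s, f i) (n : ℕ) : #s * a ^ n ≤ b ^ n * ∑ i ∈ s, f i ^ n := by
  cases n with
  | zero => simp
  | succ n =>
    rcases s.eq_empty_or_nonempty with rfl | hs
    · simp
    refine Nat.le_of_mul_le_mul_left ?_ (pow_pos hs.card_pos n)
    calc #s ^ n * (#s * a ^ (n + 1)) = (#s * a) ^ (n + 1) := by ring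
      _ ≤ (b * ∑ i ∈ s, f i) ^ (n + 1) := Nat.pow_le_pow_left h _
      _ = b ^ (n + 1) * (∑ i ∈ s, f i) ^ (n + 1) := mul_pow _ _ _
      _ ≤ b ^ (n + 1) * (#s ^ n * ∑ i ∈ s, f i ^ (n + 1)) :=
        Nat.mul_le_mul_left _ (pow_sum_le_card_mul_sum_pow (fun _ _ => Nat.zero_le _) n)
      _ = #s ^ n * (b ^ (n + 1) * ∑ i ∈ s, f i ^ (n + 1)) := by ring

theorem exists_subset_card_le_add_forall_not_subset [DecidableEq V] (F : Finset (Finset V))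
    (hF : ∀ S ∈ F, S.Nonempty) (B : Finset V) :
    ∃ B' ⊆ B, #B ≤ #B' + #F ∧ ∀ S ∈ F, ¬S ⊆ B' := by
  choose g hg using hF
  set Y := F.attach.image fun S => g S.1 S.2
  have hY : #Y ≤ #F := card_image_le.trans card_attach.le
  refine ⟨B \ Y, sdiff_subset, (card_le_card_sdiff_add_card (t := Y)).trans (by omega), ?_⟩
  intro S hS hSB
  exact (mem_sdiff.1 (hSB (hg S hS))).2 (mem_image.2 ⟨⟨S, hS⟩, mem_attach _ _, rfl⟩)

def commonNbhd [DecidableEq α] (χ : V → V → α) (c : α) (S W : Finset V) : Finset V :=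
  {w ∈ W | ∀ v ∈ S, χ v w = c}

def HasLargeCommonNbhds [DecidableEq α] (χ : V → V → α) (c : α) (k d : ℕ) (P W : Finset V) :
    Prop :=
  ∀ S ⊆ P, #S = k → #W ≤ d * #(commonNbhd χ c S W)

theorem HasLargeCommonNbhds.mono [DecidableEq α] {χ : V → V → α} {c : α} {k d : ℕ}
    {P Q W : Finset V} (h : HasLargeCommonNbhds χ c k d P W) (hQP : Q ⊆ P) :
    HasLargeCommonNbhds χ c k d Q W :=
  fun S hSQ => h S (hSQ.trans hQP)

theorem isMonoBetween_of_subset_commonNbhd [DecidableEq α] {χ : V → V → α} {c : α}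
    {X Y W : Finset V} (h : Y ⊆ commonNbhd χ c X W) : IsMonoBetween χ c X Y :=
  fun u hu _ hv => (mem_filter.1 (h hv)).2 u hu

theorem exists_card_mul_card_le_mul_sum_card_commonNbhd [Fintype α] [DecidableEq α]
    [Nonempty α] (χ : V → V → α) (U W : Finset V) :
    ∃ c, #U * #W ≤ card α * ∑ u ∈ U, #(commonNbhd χ c {u} W) := by
  obtain ⟨c, -, hc⟩ := exists_le_of_sum_le (s := univ) (f := fun _ => #U * #W)
    (g := fun c => card α * ∑ u ∈ U, #(commonNbhd χ c {u} W)) univ_nonempty <| by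
      rw [sum_const, card_univ, smul_eq_mul, ← mul_sum, sum_comm]
      refine Nat.mul_le_mul_left _ (le_of_eq ?_)
      rw [← smul_eq_mul, ← sum_const]
      refine sum_congr rfl fun u _ => ?_
      simp only [commonNbhd, mem_singleton, forall_eq]
      exact card_eq_sum_card_fiberwise fun _ _ => mem_univ _
  exact ⟨c, hc⟩

theorem card_filter_piFinset_subset [DecidableEq V] [DecidableEq α] (χ : V → V → α) (c : α)
    {s : ℕ} {S U : Finset V} (W : Finset V) (hSU : S ⊆ U) :
    #{T ∈ piFinset fun _ : Fin s => W | S ⊆ {u ∈ U | ∀ i, χ u (T i) = c}} =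
      #(commonNbhd χ c S W) ^ s := by
  have : {T ∈ piFinset fun _ : Fin s => W | S ⊆ {u ∈ U | ∀ i, χ u (T i) = c}} =
      piFinset fun _ => commonNbhd χ c S W := by
    ext T
    simp only [mem_filter, mem_piFinset, commonNbhd, subset_iff]
    exact ⟨fun h i => ⟨h.1 i, fun v hv => (h.2 hv).2 i⟩,
      fun h => ⟨fun i => (h i).1, fun v hv => ⟨hSU hv, fun i => (h i).2 v hv⟩⟩⟩
  rw [this, card_piFinset, prod_const, card_univ, Fintype.card_fin]

theorem card_mul_pow_le_pow_mul_sum_card_filter_piFinset [DecidableEq V] [DecidableEq α]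
    (χ : V → V → α) (c : α) {U W : Finset V} {r : ℕ}
    (hc : #U * #W ≤ r * ∑ u ∈ U, #(commonNbhd χ c {u} W)) (s : ℕ) :
    #U * #W ^ s ≤ r ^ s * ∑ T ∈ piFinset fun _ : Fin s => W, #{u ∈ U | ∀ i, χ u (T i) = c} := by
  have hswap := sum_card_bipartiteAbove_eq_sum_card_bipartiteBelow (t := U)
    (s := piFinset fun _ : Fin s => W) fun T u => ∀ i, χ u (T i) = c
  simp only [bipartiteAbove, bipartiteBelow] at hswap
  rw [hswap]
  refine (card_mul_pow_le_pow_mul_sum_pow hc s).trans_eq (congrArg _ (sum_congr rfl fun u hu => ?_))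
  rw [← card_filter_piFinset_subset χ c W (singleton_subset_iff.2 hu)]
  simp [hu]

theorem pow_mul_sum_card_filter_subset_le [DecidableEq V] [DecidableEq α] (χ : V → V → α)
    (c : α) {U W : Finset V} {F : Finset (Finset V)} {d s : ℕ}
    (hF : ∀ S ∈ F, S ⊆ U ∧ d * #(commonNbhd χ c S W) < #W) :
    d ^ s * ∑ T ∈ piFinset fun _ : Fin s => W, #{S ∈ F | S ⊆ {u ∈ U | ∀ i, χ u (T i) = c}} ≤
      #F * #W ^ s := by
  have hswap := sum_card_bipartiteAbove_eq_sum_card_bipartiteBelow (t := F)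
    (s := piFinset fun _ : Fin s => W) fun T S => S ⊆ {u ∈ U | ∀ i, χ u (T i) = c}
  simp only [bipartiteAbove, bipartiteBelow] at hswap
  rw [hswap, mul_sum, ← smul_eq_mul, ← sum_const]
  refine sum_le_sum fun S hS => ?_
  rw [card_filter_piFinset_subset χ c W (hF S hS).1, ← mul_pow]
  exact Nat.pow_le_pow_left (hF S hS).2.le s

theorem two_mul_pow_mul_sum_card_filter_subset_le [DecidableEq V] [DecidableEq α]
    (χ : V → V → α) (c : α) {U W : Finset V} {F : Finset (Finset V)} {k r s : ℕ} (hr : 0 < r)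
    (hk : 1 ≤ k) (hU : 2 * #U ^ (k - 1) ≤ r ^ (s * (s - 1)))
    (hF : ∀ S ∈ F, S ∈ U.powersetCard k ∧ r ^ s * #(commonNbhd χ c S W) < #W) :
    2 * r ^ s * ∑ T ∈ piFinset fun _ : Fin s => W,
        #{S ∈ F | S ⊆ {u ∈ U | ∀ i, χ u (T i) = c}} ≤ #U * #W ^ s := by
  set bad := fun T : Fin s → V => #{S ∈ F | S ⊆ {u ∈ U | ∀ i, χ u (T i) = c}}
  have hF' : r ^ (s * s) * ∑ T ∈ piFinset fun _ : Fin s => W, bad T ≤ #U ^ k * #W ^ s := by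
    have h := pow_mul_sum_card_filter_subset_le χ c (d := r ^ s) (s := s)
      fun S hS => ⟨(mem_powersetCard.1 (hF S hS).1).1, (hF S hS).2⟩
    rw [← pow_mul] at h
    refine h.trans (Nat.mul_le_mul_right _ ?_)
    calc #F ≤ #(U.powersetCard k) := card_le_card fun S hS => (hF S hS).1
      _ ≤ #U ^ k := by rw [card_powersetCard]; exact Nat.choose_le_pow _ _
  have hUk : 2 * r ^ s * #U ^ k ≤ r ^ (s * s) * #U := by
    obtain ⟨k, rfl⟩ := Nat.exists_eq_add_of_le' hk
    calc 2 * r ^ s * #U ^ (k + 1) = r ^ s * (2 * #U ^ k) * #U := by ring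
      _ ≤ r ^ s * r ^ (s * (s - 1)) * #U := by gcongr; simpa using hU
      _ = r ^ (s * s) * #U := by
        rw [← pow_add]; congr 2; cases s <;> simp [Nat.mul_succ]; ring
  refine Nat.le_of_mul_le_mul_left ?_ (pow_pos hr (s * s))
  calc r ^ (s * s) * (2 * r ^ s * ∑ T ∈ piFinset fun _ : Fin s => W, bad T)
      = 2 * r ^ s * (r ^ (s * s) * ∑ T ∈ piFinset fun _ : Fin s => W, bad T) := by ring
    _ ≤ 2 * r ^ s * #U ^ k * #W ^ s := by rw [mul_assoc _ (#U ^ k)]; gcongr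
    _ ≤ r ^ (s * s) * (#U * #W ^ s) := by rw [← mul_assoc]; gcongr

theorem exists_subset_hasLargeCommonNbhds [DecidableEq V] [Fintype α] [DecidableEq α]
    [Nonempty α] (χ : V → V → α) (U W : Finset V) {k s : ℕ} (hk : 1 ≤ k)
    (hU : 2 * #U ^ (k - 1) ≤ card α ^ (s * (s - 1))) :
    ∃ c, ∃ B ⊆ U, #U ≤ 2 * card α ^ s * #B ∧ HasLargeCommonNbhds χ c k (card α ^ s) B W := by
  set r := card α
  have hr : 0 < r := card_pos
  rcases W.eq_empty_or_nonempty with rfl | hW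
  · refine ⟨Classical.arbitrary α, U, subset_rfl, ?_, fun _ _ _ => by simp⟩
    exact Nat.le_mul_of_pos_left _ (by positivity)
  obtain ⟨c, hc⟩ := exists_card_mul_card_le_mul_sum_card_commonNbhd χ U W
  -- `N T` is the set of vertices of `U` sending colour `c` to every entry of the random tuple `T`
  set N : (Fin s → V) → Finset V := fun T => {u ∈ U | ∀ i, χ u (T i) = c}
  set Bad := {S ∈ U.powersetCard k | r ^ s * #(commonNbhd χ c S W) < #W}
  set bad : (Fin s → V) → Finset (Finset V) := fun T => {S ∈ Bad | S ⊆ N T}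
  have hN := card_mul_pow_le_pow_mul_sum_card_filter_piFinset χ c hc s
  have hbad := two_mul_pow_mul_sum_card_filter_subset_le χ c (F := Bad) hr hk hU
    fun S hS => mem_filter.1 hS
  obtain ⟨T, -, hT⟩ : ∃ T ∈ piFinset fun _ : Fin s => W,
      #U + 2 * r ^ s * #(bad T) ≤ 2 * r ^ s * #(N T) := by
    refine exists_le_of_sum_le (piFinset_nonempty.2 fun _ => hW) ?_
    rw [sum_add_distrib, sum_const, card_piFinset, prod_const, card_univ, Fintype.card_fin,
      smul_eq_mul, ← mul_sum, ← mul_sum]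
    linarith
  have hbad_ne : ∀ S ∈ bad T, S.Nonempty := by
    intro S hS
    rw [nonempty_iff_ne_empty]
    rintro rfl
    have := (mem_filter.1 (mem_filter.1 hS).1).2
    simp [commonNbhd] at this
    nlinarith [Nat.one_le_pow s r hr]
  obtain ⟨B, hBN, hBcard, hB⟩ := exists_subset_card_le_add_forall_not_subset (bad T) hbad_ne (N T)
  refine ⟨c, B, hBN.trans (filter_subset _ _), ?_, fun S hSB hSk => ?_⟩
  · nlinarith [Nat.mul_le_mul_left (2 * r ^ s) hBcard]
  · by_contra hS
    have hSU : S ⊆ U := hSB.trans (hBN.trans (filter_subset _ _))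
    exact hB S (mem_filter.2 ⟨mem_filter.2 ⟨mem_powersetCard.2 ⟨hSU, hSk⟩, not_le.1 hS⟩,
      hSB.trans hBN⟩) hSB

theorem exists_subset_forall_hasLargeCommonNbhds [DecidableEq V] [Fintype α] [DecidableEq α]
    (χ : V → V → α) (hα : 2 ≤ card α)
    {k s n m : ℕ} (hk : 1 ≤ k) (hn : 2 * n ^ (k - 1) ≤ card α ^ (s * (s - 1)))
    {ι : Type*} (W : ι → Finset V) (I : Finset ι) :
    ∀ U : Finset V, #U ≤ n → card α ^ (m + #I * (s + 1)) ≤ #U →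
      ∃ P ⊆ U, card α ^ m ≤ #P ∧
        ∀ j ∈ I, ∃ c, HasLargeCommonNbhds χ c k (card α ^ s) P (W j) := by
  classical
  have : Nonempty α := card_pos_iff.1 (by omega)
  induction I using Finset.induction_on with
  | empty => exact fun U _ hU => ⟨U, subset_rfl, by simpa using hU, by simp⟩
  | insert j I hj ih =>
    intro U hUn hU
    obtain ⟨c, B, hBU, hB, hBj⟩ := exists_subset_hasLargeCommonNbhds χ U (W j) hk
      ((Nat.mul_le_mul_left 2 (Nat.pow_le_pow_left hUn _)).trans hn)
    obtain ⟨P, hPB, hP, hPI⟩ := ih B ((card_le_card hBU).trans hUn) <| by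
      refine Nat.le_of_mul_le_mul_left ?_ (pow_pos (by omega : 0 < card α) (s + 1))
      calc card α ^ (s + 1) * card α ^ (m + #I * (s + 1))
          = card α ^ (m + #(insert j I) * (s + 1)) := by
            rw [card_insert_of_notMem hj, ← pow_add]; ring_nf
        _ ≤ 2 * card α ^ s * #B := hU.trans hB
        _ ≤ card α ^ (s + 1) * #B := by
            rw [pow_succ, mul_comm 2]; exact Nat.mul_le_mul_right _ (Nat.mul_le_mul_left _ hα)
    refine ⟨P, hPB.trans hBU, hP, fun i hi => ?_⟩
    rcases mem_insert.1 hi with rfl | hi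
    · exact ⟨c, hBj.mono hPB⟩
    · exact hPI i hi

theorem HasLargeCommonNbhds.pow_le_card_commonNbhd [DecidableEq α] {χ : V → V → α} {c : α}
    {k r s m : ℕ} {P W X : Finset V} (h : HasLargeCommonNbhds χ c k (r ^ s) P W) (hr : 0 < r)
    (hXP : X ⊆ P) (hX : #X = k) (hW : r ^ (s + m) ≤ #W) : r ^ m ≤ #(commonNbhd χ c X W) :=
  Nat.le_of_mul_le_mul_left (by rw [← pow_add]; exact hW.trans (h X hXP hX)) (pow_pos hr s)

theorem exists_monochromatic_blocks [DecidableEq V] [Fintype α] [DecidableEq α]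
    {χ : V → V → α} (hχ : ∀ u v, χ u v = χ v u) (hα : 2 ≤ card α) {k s n : ℕ} (hk : 1 ≤ k)
    (hn : 2 * n ^ (k - 1) ≤ card α ^ (s * (s - 1))) :
    ∀ (p : ℕ) (A : Fin p → Finset V), (∀ j, #(A j) ≤ n) →
      (∀ j, card α ^ (card α * k + (p - 1) * (s + 1)) ≤ #(A j)) →
      ∃ X : Fin p → Finset V, (∀ j, X j ⊆ A j) ∧ (∀ j, #(X j) = k) ∧
        (∀ j, ∃ c, IsMonoClique χ c (X j)) ∧
        ∀ i j, i ≠ j → ∃ c, IsMonoBetween χ c (X i) (X j) := by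
  set r := card α
  intro p
  induction p with
  | zero => exact fun _ _ _ => ⟨finZeroElim, finZeroElim, finZeroElim, finZeroElim, finZeroElim⟩
  | succ p ih =>
    intro A hAn hA
    simp only [Nat.add_sub_cancel] at hA
    obtain ⟨P, hPA, hP, hrich⟩ := exists_subset_forall_hasLargeCommonNbhds χ hα hk hn
      (fun j : Fin p => A j.succ) univ (A 0) (hAn 0) (by simpa using hA 0)
    choose col hcol using fun j => hrich j (mem_univ j)
    obtain ⟨c, X₀, hX₀P, hX₀, hX₀c⟩ := exists_isMonoClique_of_pow_le hχ hα hP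
    obtain ⟨X', hX'A, hX', hX'c, hX'X'⟩ := ih (fun j => commonNbhd χ (col j) X₀ (A j.succ))
      (fun j => (card_le_card (filter_subset _ _)).trans (hAn j.succ)) fun j => by
        refine (hcol j).pow_le_card_commonNbhd (by omega) hX₀P hX₀
          ((Nat.pow_le_pow_right (by omega) ?_).trans (hA j.succ))
        have := Nat.le_mul_of_pos_left (s + 1) j.pos
        rw [Nat.sub_one_mul]
        omega
    have hX₀X' : ∀ j, IsMonoBetween χ (col j) X₀ (X' j) :=
      fun j => isMonoBetween_of_subset_commonNbhd (hX'A j)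
    refine ⟨Fin.cons X₀ X', ?_, ?_, ?_, ?_⟩ <;>
      simp only [Fin.forall_fin_succ, Fin.cons_zero, Fin.cons_succ, ne_eq, Fin.succ_inj,
        Fin.succ_ne_zero, (Fin.succ_ne_zero _).symm, not_true_eq_false, not_false_eq_true,
        IsEmpty.forall_iff, forall_const, true_and]
    · exact ⟨hX₀P.trans hPA, fun j => (hX'A j).trans (filter_subset _ _)⟩
    · exact ⟨hX₀, hX'⟩
    · exact ⟨⟨c, hX₀c⟩, hX'c⟩
    · exact ⟨fun j => ⟨col j, hX₀X' j⟩, fun i => ⟨⟨col i, (hX₀X' i).symm hχ⟩, hX'X' i⟩⟩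

theorem natCeil_le_mul_natCeil_div (x : ℝ) {D : ℕ} (hD : 0 < D) :
    ⌈x⌉₊ ≤ D * ⌈x / D⌉₊ ∧ D * ⌈x / D⌉₊ < ⌈x⌉₊ + D := by
  have hD' : (0 : ℝ) < D := by exact_mod_cast hD
  rcases lt_or_ge x 0 with hx | hx
  · rw [Nat.ceil_eq_zero.2 hx.le, Nat.ceil_eq_zero.2 (div_nonpos_of_nonpos_of_nonneg hx.le hD'.le)]
    omega
  constructor
  · refine Nat.ceil_le.2 ?_
    push_cast
    rw [← div_le_iff₀' hD']
    exact Nat.le_ceil _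
  · have h := Nat.ceil_lt_add_one (div_nonneg hx hD'.le)
    have : (D : ℝ) * ⌈x / D⌉₊ < ⌈x⌉₊ + D := by
      calc (D : ℝ) * ⌈x / D⌉₊ < D * (x / D + 1) := by gcongr
        _ = x + D := by field_simp
        _ ≤ ⌈x⌉₊ + D := by gcongr; exact Nat.le_ceil x
    exact_mod_cast this

theorem clog_le_mul_natCeil_logb_div (b n : ℕ) {D : ℕ} (hD : 0 < D) :
    Nat.clog b n ≤ D * ⌈Real.logb b n / D⌉₊ ∧ D * ⌈Real.logb b n / D⌉₊ < Nat.clog b n + D := by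
  rw [← Real.natCeil_logb_natCast]
  exact natCeil_le_mul_natCeil_div _ hD

theorem two_mul_pow_le_pow_of_clog_mul_add_one_le {r n m e : ℕ} (hr : 2 ≤ r)
    (h : Nat.clog r n * m + 1 ≤ e) : 2 * n ^ m ≤ r ^ e :=
  calc 2 * n ^ m ≤ r * (r ^ Nat.clog r n) ^ m := by gcongr; exact Nat.le_pow_clog (by omega) n
    _ ≤ r ^ e := by rw [← pow_mul, ← pow_succ']; exact Nat.pow_le_pow_right (by omega) h

theorem two_mul_le_two_pow {b : ℕ} (hb : 1 ≤ b) : 2 * b ≤ 2 ^ b := by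
  obtain ⟨b, rfl⟩ := Nat.exists_eq_add_of_le' hb
  have := Nat.lt_two_pow_self (n := b)
  rw [pow_succ]
  omega

theorem sub_one_mul_two_pow_add_two_le (t : ℕ) : (t - 1) * 2 ^ (t / 2 + 1) + 2 ≤ 2 ^ (t + 1) := by
  have ht : t ≤ 2 ^ (t - t / 2) := by
    rcases Nat.eq_zero_or_pos t with rfl | ht
    · simp
    · exact (by omega : t ≤ 2 * (t - t / 2)).trans (two_mul_le_two_pow (by omega))
  have hsplit : 2 ^ (t + 1) = 2 ^ (t - t / 2) * 2 ^ (t / 2 + 1) := by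
    rw [← pow_add]; congr 1; omega
  have h2 : 2 ≤ 2 ^ (t / 2 + 1) := Nat.le_self_pow (by omega) 2
  rw [hsplit]
  calc (t - 1) * 2 ^ (t / 2 + 1) + 2
        ≤ (2 ^ (t - t / 2) - 1) * 2 ^ (t / 2 + 1) + 2 ^ (t / 2 + 1) := by gcongr
    _ = 2 ^ (t - t / 2) * 2 ^ (t / 2 + 1) := by
        rw [Nat.sub_one_mul, Nat.sub_add_cancel (Nat.le_mul_of_pos_left _ (by positivity))]

theorem exponent_bounds_of_le_mul_lt_add {r t D c ℓ k : ℕ} (hbudget : r + (t - 1) * c + 1 ≤ D)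
    (hcc : 2 * D ≤ c * c) (hcD : c ≤ D) (hℓk : ℓ ≤ D * k) (hkℓ : D * k < ℓ + D)
    (hℓ : D * (D + t) < ℓ) :
    1 ≤ k ∧ ℓ * (k - 1) + 1 ≤ c * k * (c * k - 1) ∧ r * k + (t - 1) * (c * k + 1) < ℓ := by
  have hk : D + t < k := Nat.lt_of_mul_lt_mul_left (hℓ.trans_le hℓk)
  have hD : 1 ≤ D := by nlinarith
  have hc : 1 ≤ c := by nlinarith
  refine ⟨by omega, ?_, ?_⟩
  · have hck : 1 ≤ c * k := Nat.mul_pos hc (by omega)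
    zify [hck, (by omega : 1 ≤ k)]
    have hℓk' : (ℓ : ℤ) * (k - 1) ≤ D * k * (k - 1) :=
      mul_le_mul_of_nonneg_right (by exact_mod_cast hℓk) (by omega)
    have hcc' : (2 * D : ℤ) * (k * k) ≤ c * c * (k * k) :=
      mul_le_mul_of_nonneg_right (by exact_mod_cast hcc) (by positivity)
    have hcD' : (c : ℤ) * k ≤ D * k :=
      mul_le_mul_of_nonneg_right (by exact_mod_cast hcD) (by positivity)
    have hDk : (1 : ℤ) ≤ D * (k * k) := by
      have : (1 : ℤ) ≤ k := by exact_mod_cast (by omega : 1 ≤ k)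
      have : (1 : ℤ) ≤ D := by exact_mod_cast hD
      nlinarith
    nlinarith
  · have := Nat.mul_le_mul_right k hbudget
    have : t - 1 ≤ t := Nat.sub_le t 1
    nlinarith

theorem exists_two_mul_le_mul_self_and_add_sub_one_mul_le (t : ℕ) {r : ℕ} (hr : 2 ≤ r) :
    ∃ c, r + (t - 1) * c + 1 ≤ 2 ^ (t + 1) * r ∧ 2 * (2 ^ (t + 1) * r) ≤ c * c ∧
      c ≤ 2 ^ (t + 1) * r := by
  refine ⟨2 ^ (t / 2 + 1) * r, ?_, ?_, ?_⟩
  · have := Nat.mul_le_mul_right r (sub_one_mul_two_pow_add_two_le t)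
    nlinarith
  · calc 2 * (2 ^ (t + 1) * r) ≤ 2 ^ (t + 1) * (r * r) := by
          rw [mul_comm 2, mul_assoc]; exact Nat.mul_le_mul_left _ (Nat.mul_le_mul_left _ hr)
      _ ≤ 2 ^ (t / 2 + 1) * 2 ^ (t / 2 + 1) * (r * r) := by
          rw [← pow_add]
          exact Nat.mul_le_mul_right _ (Nat.pow_le_pow_right (by norm_num) (by omega))
      _ = 2 ^ (t / 2 + 1) * r * (2 ^ (t / 2 + 1) * r) := by ring
  · exact Nat.mul_le_mul_right _ (Nat.pow_le_pow_right (by omega) (by omega))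

theorem stmt_14_general (r t : ℕ) (hr : 2 ≤ r) :
    ∃ N : ℕ, ∀ (n₀ : ℕ), N < n₀ →
      ∀ {V : Type} [Fintype V] [DecidableEq V],
      ∀ (χ : V → V → Fin r), (∀ u v : V, χ u v = χ v u) →
      ∀ (A : Fin t → Finset V),
        (∀ i j : Fin t, i ≠ j → Disjoint (A i) (A j)) →
        (∀ i : Fin t, (A i).card = n₀) →
        ∃ X : Fin t → Finset V,
          (∀ i : Fin t, X i ⊆ A i) ∧
          (∀ i : Fin t, (X i).card = ⌈Real.logb r n₀ / (2 ^ (t + 1) * r)⌉₊) ∧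
          (∀ i : Fin t, ∃ c : Fin r,
            ∀ u ∈ X i, ∀ v ∈ X i, u ≠ v → χ u v = c) ∧
          (∀ i j : Fin t, i ≠ j → ∃ c : Fin r,
            ∀ u ∈ X i, ∀ v ∈ X j, χ u v = c) := by
  set D := 2 ^ (t + 1) * r
  obtain ⟨c, hbudget, hcc, hcD⟩ := exists_two_mul_le_mul_self_and_add_sub_one_mul_le t hr
  refine ⟨r ^ (D * (D + t)), fun n₀ hn₀ V _ _ χ hχ A _ hA => ?_⟩
  have hclog := clog_le_mul_natCeil_logb_div r n₀ (D := D) (by positivity)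
  rw [show ((D : ℕ) : ℝ) = 2 ^ (t + 1) * r by push_cast [D]; rfl] at hclog
  obtain ⟨hk, hdense, hsize⟩ := exponent_bounds_of_le_mul_lt_add hbudget hcc hcD hclog.1 hclog.2
    ((Nat.lt_clog_iff_pow_lt (by omega)).2 hn₀)
  obtain ⟨X, hXA, hX, hXc, hXX⟩ := exists_monochromatic_blocks hχ (by simpa using hr) hk
    (by simpa using two_mul_pow_le_pow_of_clog_mul_add_one_le hr hdense) t A
    (fun j => (hA j).le) fun j => by
      simpa [hA j] using ((Nat.lt_clog_iff_pow_lt (by omega)).1 hsize).le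
  exact ⟨X, hXA, hX, hXc, hXX⟩

/-- Given an `r`-edge-coloring (`r ≥ 2`) of a complete graph and pairwise disjoint
vertex sets `A₁, …, A_t` each of size `n₀`, for `n₀` sufficiently large (depending on
`r` and `t`) there exist subsets `X_i ⊆ A_i` of size `⌈(1/(2^{t+1}·r))·log_r n₀⌉` such
that each `X_i` is a monochromatic clique and the complete bipartite graph between
`X_i` and `X_j` is monochromatic for every `i ≠ j`. -/
theorem stmt_14 (r t : ℕ) (hr : 2 ≤ r) (ht : 1 ≤ t) :
    ∃ N : ℕ, ∀ (n₀ : ℕ), N < n₀ →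
      ∀ {V : Type} [Fintype V] [DecidableEq V],
      ∀ (χ : V → V → Fin r), (∀ u v : V, χ u v = χ v u) →
      ∀ (A : Fin t → Finset V),
        (∀ i j : Fin t, i ≠ j → Disjoint (A i) (A j)) →
        (∀ i : Fin t, (A i).card = n₀) →
        ∃ X : Fin t → Finset V,
          (∀ i : Fin t, X i ⊆ A i) ∧
          (∀ i : Fin t, (X i).card = ⌈Real.logb r n₀ / (2 ^ (t + 1) * r)⌉₊) ∧
          (∀ i : Fin t, ∃ c : Fin r,
            ∀ u ∈ X i, ∀ v ∈ X i, u ≠ v → χ u v = c) ∧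
          (∀ i j : Fin t, i ≠ j → ∃ c : Fin r,
            ∀ u ∈ X i, ∀ v ∈ X j, χ u v = c) :=
  stmt_14_general r t hr
end

section
/- In any r-edge-coloring of a complete graph whose vertex set is partitioned into nonempty monochromatic cliques V₁,…,V_s with each bipartite graph between V_i and V_j monochromatic, if all r colors appear somewhere (inside some V_i or between some pair V_i, V_j), and each |V_i| ≥ k, then the coloring contains the k-blow-up of some r-fully-colored complete graph F on at most 2r−2 vertices that uses all r colors and is vertex-minimal with this property. -/
open Finset

theorem stmt15_exists_cover {r s : ℕ} (hr : 2 ≤ r)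
    (cin : Fin s → Fin r) (cbet : Fin s → Fin s → Fin r)
    (hall : ∀ c : Fin r, (∃ i, cin i = c) ∨ ∃ i j, i ≠ j ∧ cbet i j = c) :
    ∃ T : Finset (Fin s),
      (∀ c : Fin r, (∃ i ∈ T, cin i = c) ∨ ∃ i ∈ T, ∃ j ∈ T, i ≠ j ∧ cbet i j = c) ∧
      T.card ≤ 2 * r - 2 := by
  classical
  have hW : ∀ c : Fin r, ∃ W : Finset (Fin s),
      W.card ≤ 2 ∧ ((∃ i, cin i = c) → W.card ≤ 1) ∧
      ((∃ i ∈ W, cin i = c) ∨ ∃ i ∈ W, ∃ j ∈ W, i ≠ j ∧ cbet i j = c) := by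
    intro c
    by_cases h : ∃ i, cin i = c
    · obtain ⟨i, hi⟩ := h
      exact ⟨{i}, by simp, fun _ => by simp, Or.inl ⟨i, by simp, hi⟩⟩
    · obtain ⟨i, j, hij, hc⟩ := (hall c).resolve_left h
      refine ⟨{i, j}, ?_, fun hx => absurd hx h,
        Or.inr ⟨i, by simp, j, by simp, hij, hc⟩⟩
      · exact (Finset.card_insert_le _ _).trans (by simp)
  choose W hW2 hW1 hWw using hW
  by_cases hvc : ∀ c : Fin r, ∃ i, cin i = c
  · refine ⟨Finset.univ.biUnion W, fun c => ?_, ?_⟩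
    · rcases hWw c with ⟨i, hi, h⟩ | ⟨i, hi, j, hj, h⟩
      · exact Or.inl ⟨i, mem_biUnion.2 ⟨c, mem_univ _, hi⟩, h⟩
      · exact Or.inr ⟨i, mem_biUnion.2 ⟨c, mem_univ _, hi⟩, j,
          mem_biUnion.2 ⟨c, mem_univ _, hj⟩, h⟩
    · calc (Finset.univ.biUnion W).card ≤ ∑ c, (W c).card := card_biUnion_le
        _ ≤ ∑ _c : Fin r, 1 := Finset.sum_le_sum fun c _ => hW1 c (hvc c)
        _ = r := by simp
        _ ≤ 2 * r - 2 := by omega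
  · push_neg at hvc
    obtain ⟨cs, hcs⟩ := hvc
    obtain ⟨u, v, huv, hc⟩ := (hall cs).resolve_left (by push_neg; exact hcs)
    set X : Finset (Fin r) := {cs, cin u, cin v} with hX
    refine ⟨{u, v} ∪ Xᶜ.biUnion W, fun c => ?_, ?_⟩
    · by_cases hcX : c ∈ X
      · simp only [hX, mem_insert, mem_singleton] at hcX
        rcases hcX with rfl | rfl | rfl
        · exact Or.inr ⟨u, by simp, v, by simp, huv, hc⟩
        · exact Or.inl ⟨u, by simp, rfl⟩
        · exact Or.inl ⟨v, by simp, rfl⟩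
      · have hsub : W c ⊆ {u, v} ∪ Xᶜ.biUnion W := fun x hx =>
          mem_union_right _ (mem_biUnion.2 ⟨c, by simpa using hcX, hx⟩)
        rcases hWw c with ⟨i, hi, h⟩ | ⟨i, hi, j, hj, h⟩
        · exact Or.inl ⟨i, hsub hi, h⟩
        · exact Or.inr ⟨i, hsub hi, j, hsub hj, h⟩
    · have hX2 : 2 ≤ X.card := by
        have : ({cs, cin u} : Finset (Fin r)) ⊆ X := by
          intro x hx; simp only [mem_insert, mem_singleton] at hx
          rcases hx with rfl | rfl <;> simp [hX]
        have h2 : ({cs, cin u} : Finset (Fin r)).card = 2 :=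
          Finset.card_pair (fun h => hcs u h.symm)
        have := Finset.card_le_card this
        omega
      have hcompl : Xᶜ.card = r - X.card := by
        have := Finset.card_compl X
        simpa using this
      have hb : (Xᶜ.biUnion W).card ≤ 2 * Xᶜ.card := by
        calc (Xᶜ.biUnion W).card ≤ ∑ c ∈ Xᶜ, (W c).card := card_biUnion_le
          _ ≤ ∑ _c ∈ Xᶜ, 2 := Finset.sum_le_sum fun c _ => hW2 c
          _ = 2 * Xᶜ.card := by rw [Finset.sum_const]; ring
      have huv2 : ({u, v} : Finset (Fin s)).card ≤ 2 :=
        (Finset.card_insert_le _ _).trans (by simp)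
      have := Finset.card_union_le ({u, v} : Finset (Fin s)) (Xᶜ.biUnion W)
      omega

theorem stmt15_exists_min_cover {r s : ℕ} (hr : 2 ≤ r)
    (cin : Fin s → Fin r) (cbet : Fin s → Fin s → Fin r)
    (hall : ∀ c : Fin r, (∃ i, cin i = c) ∨ ∃ i j, i ≠ j ∧ cbet i j = c) :
    ∃ T : Finset (Fin s),
      (∀ c : Fin r, (∃ i ∈ T, cin i = c) ∨ ∃ i ∈ T, ∃ j ∈ T, i ≠ j ∧ cbet i j = c) ∧
      T.card ≤ 2 * r - 2 ∧
      ∀ i ∈ T, ¬ (∀ c : Fin r, (∃ x ∈ T.erase i, cin x = c) ∨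
          ∃ x ∈ T.erase i, ∃ y ∈ T.erase i, x ≠ y ∧ cbet x y = c) := by
  classical
  obtain ⟨T₀, hT₀, hT₀card⟩ := stmt15_exists_cover hr cin cbet hall
  set Cov : Finset (Fin s) → Prop := fun T =>
    ∀ c : Fin r, (∃ i ∈ T, cin i = c) ∨ ∃ i ∈ T, ∃ j ∈ T, i ≠ j ∧ cbet i j = c with hCov
  have hne : (Finset.univ.filter Cov : Finset (Finset (Fin s))).Nonempty :=
    ⟨T₀, by simp [hCov]; exact hT₀⟩
  obtain ⟨T, hTmem, hTmin⟩ := Finset.exists_min_image _ Finset.card hne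
  simp only [Finset.mem_filter, Finset.mem_univ, true_and] at hTmem
  refine ⟨T, hTmem, ?_, ?_⟩
  · have := hTmin T₀ (by simp [hCov]; exact hT₀)
    omega
  · intro i hi hbad
    have := hTmin (T.erase i) (by simp only [Finset.mem_filter, Finset.mem_univ, true_and]; exact hbad)
    have := Finset.card_erase_lt_of_mem hi
    omega



/-- If an `r`-edge-colored complete graph is partitioned into nonempty monochromatic
cliques `V₁, …, V_s` with every bipartite graph between parts monochromatic (a
fully-complete multipartite coloring), all `r` colors appear, and every part has size
at least `k`, then the coloring contains the `k`-blow-up of some `r`-fully-colored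
complete graph `F` on `m ≤ 2r − 2` vertices which uses all `r` colors and is
vertex-minimal (deleting any vertex of `F` loses some color). -/
theorem stmt_15 {V : Type*} [Fintype V] [DecidableEq V] (r s k : ℕ) (hr : 2 ≤ r)
    (hk : 1 ≤ k)
    (χ : V → V → Fin r) (hχ : ∀ u v : V, χ u v = χ v u)
    (P : Fin s → Finset V)
    (hdisj : ∀ i j : Fin s, i ≠ j → Disjoint (P i) (P j))
    (hcover : ∀ v : V, ∃ i : Fin s, v ∈ P i)
    (hsize : ∀ i : Fin s, k ≤ (P i).card)
    (cin : Fin s → Fin r) (cbet : Fin s → Fin s → Fin r)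
    (hmonoin : ∀ i : Fin s, ∀ u ∈ P i, ∀ v ∈ P i, u ≠ v → χ u v = cin i)
    (hmonobet : ∀ i j : Fin s, i ≠ j → ∀ u ∈ P i, ∀ v ∈ P j, χ u v = cbet i j)
    (hall : ∀ c : Fin r, (∃ i, cin i = c) ∨ ∃ i j, i ≠ j ∧ cbet i j = c) :
    ∃ (m : ℕ) (fv : Fin m → Fin r) (fe : Fin m → Fin m → Fin r),
      m ≤ 2 * r - 2 ∧
      (∀ a b : Fin m, fe a b = fe b a) ∧
      -- F uses all r colors
      (∀ c : Fin r, (∃ a, fv a = c) ∨ ∃ a b, a ≠ b ∧ fe a b = c) ∧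
      -- F is vertex-minimal: deleting any vertex loses some color
      (∀ w : Fin m, ∃ c : Fin r,
        ¬ ((∃ a, a ≠ w ∧ fv a = c) ∨ ∃ a b, a ≠ b ∧ a ≠ w ∧ b ≠ w ∧ fe a b = c)) ∧
      -- the k-blow-up of F occurs in the coloring χ
      ∃ Y : Fin m → Finset V,
        (∀ a b : Fin m, a ≠ b → Disjoint (Y a) (Y b)) ∧
        (∀ a : Fin m, (Y a).card = k) ∧
        (∀ a : Fin m, ∀ u ∈ Y a, ∀ v ∈ Y a, u ≠ v → χ u v = fv a) ∧
        (∀ a b : Fin m, a ≠ b → ∀ u ∈ Y a, ∀ v ∈ Y b, χ u v = fe a b) := by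
  classical
  have hne : ∀ i : Fin s, (P i).Nonempty := fun i =>
    Finset.card_pos.1 (lt_of_lt_of_le hk (hsize i))
  have hsym : ∀ i j : Fin s, i ≠ j → cbet i j = cbet j i := by
    intro i j hij
    obtain ⟨u, hu⟩ := hne i
    obtain ⟨v, hv⟩ := hne j
    calc cbet i j = χ u v := (hmonobet i j hij u hu v hv).symm
      _ = χ v u := hχ u v
      _ = cbet j i := hmonobet j i (Ne.symm hij) v hv u hu
  obtain ⟨T, hTcov, hTcard, hTmin⟩ := stmt15_exists_min_cover hr cin cbet hall
  set m := T.card with hm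
  set g : Fin m ↪o Fin s := T.orderEmbOfFin rfl with hg
  have hg_mem : ∀ a : Fin m, g a ∈ T := fun a => T.orderEmbOfFin_mem rfl a
  have hg_inj : Function.Injective g := g.injective
  have hg_surj : ∀ x ∈ T, ∃ a : Fin m, g a = x := by
    intro x hx
    have : x ∈ Set.range (⇑(T.orderEmbOfFin rfl)) := by
      rw [Finset.range_orderEmbOfFin]; exact hx
    exact this
  refine ⟨m, fun a => cin (g a),
    fun a b => if a = b then cin (g a) else cbet (g a) (g b), hTcard, ?_, ?_, ?_, ?_⟩
  · intro a b
    by_cases hab : a = b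
    · subst hab; simp
    · simp only [if_neg hab, if_neg (Ne.symm hab)]
      exact hsym _ _ (fun h => hab (hg_inj h))
  · intro c
    rcases hTcov c with ⟨i, hi, hci⟩ | ⟨i, hi, j, hj, hij, hc⟩
    · obtain ⟨a, rfl⟩ := hg_surj i hi
      exact Or.inl ⟨a, hci⟩
    · obtain ⟨a, rfl⟩ := hg_surj i hi
      obtain ⟨b, rfl⟩ := hg_surj j hj
      have hab : a ≠ b := fun h => hij (by rw [h])
      exact Or.inr ⟨a, b, hab, by simp only [if_neg hab]; exact hc⟩
  · intro w
    have hbad := hTmin (g w) (hg_mem w)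
    rw [not_forall] at hbad
    obtain ⟨c, hc⟩ := hbad
    refine ⟨c, fun h => hc ?_⟩
    rcases h with ⟨a, haw, hfa⟩ | ⟨a, b, hab, haw, hbw, hfe⟩
    · exact Or.inl ⟨g a, Finset.mem_erase.2 ⟨fun h => haw (hg_inj h), hg_mem a⟩, hfa⟩
    · refine Or.inr ⟨g a, Finset.mem_erase.2 ⟨fun h => haw (hg_inj h), hg_mem a⟩,
        g b, Finset.mem_erase.2 ⟨fun h => hbw (hg_inj h), hg_mem b⟩,
        fun h => hab (hg_inj h), ?_⟩
      simpa only [if_neg hab] using hfe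
  · have hY : ∀ a : Fin m, ∃ t ⊆ P (g a), t.card = k := fun a =>
      Finset.exists_subset_card_eq (hsize (g a))
    choose Y hYsub hYcard using hY
    refine ⟨Y, ?_, hYcard, ?_, ?_⟩
    · intro a b hab
      exact Finset.disjoint_of_subset_left (hYsub a)
        (Finset.disjoint_of_subset_right (hYsub b)
          (hdisj _ _ (fun h => hab (hg_inj h))))
    · intro a u hu v hv huv
      exact hmonoin (g a) u (hYsub a hu) v (hYsub a hv) huv
    · intro a b hab u hu v hv
      simp only [if_neg hab]
      exact hmonobet (g a) (g b) (fun h => hab (hg_inj h)) u (hYsub a hu) v (hYsub b hv)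
end

section
/- For every r ≥ 2 and every 0 < ε < 1/r there exists N such that every ε-balanced r-edge-coloring of K_n with n ≥ N contains 2r disjoint vertex sets forming a fully-complete multipartite subgraph using all r colors with each part of size k; in particular R_ε^r(F_k^r) is finite, where the bound N may be tower-type of height O(r) in k and 1/ε. -/
/-!
Each colour class has density at least `ε`, so a Kővári–Sós–Turán counting argument finds a
complete bipartite graph `K_{S,S}` of that colour once `n` is large. Deleting the `O(S r)`
vertices of the bicliques found so far destroys only `O(n)` edges, so there are pairwise disjoint
bicliques `(A c, B c)`, one of each colour `c`. The `2 r` sides are then shrunk, one ordered pair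
at a time, by the bipartite Ramsey argument until all bipartite graphs between them are
monochromatic, and Ramsey's theorem inside each side leaves a monochromatic `k`-clique. Colour
`c` survives between the parts coming from `A c` and `B c`. The size `S` is a tower in `k` of
height below `(2 r)²`.
-/

open Finset Fintype Function

variable {α β κ ι V : Type*}

theorem exists_subset_card_eq_of_card_mul_le [Fintype β] [Nonempty β] {s : Finset α} (g : α → β)
    {k : ℕ} (h : card β * k ≤ #s) : ∃ b, ∃ t ⊆ s, #t = k ∧ ∀ a ∈ t, g a = b := by
  classical
  obtain ⟨b, -, hb⟩ := exists_le_card_fiber_of_mul_le_card_of_maps_to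
    (fun a _ => mem_univ (g a)) univ_nonempty (by simpa using h)
  obtain ⟨t, hts, rfl⟩ := exists_subset_card_eq hb
  exact ⟨b, t, hts.trans (filter_subset _ _), rfl, fun a ha => (mem_filter.1 (hts ha)).2⟩

theorem exists_monochromatic_biclique [Fintype κ] [Nonempty κ] (χ : α → β → κ) {k : ℕ}
    {X : Finset α} {Y : Finset β} (hX : k * card κ ≤ #X)
    (hY : k * card κ ^ (k * card κ) ≤ #Y) :
    ∃ X' ⊆ X, ∃ Y' ⊆ Y, #X' = k ∧ #Y' = k ∧ ∃ c, ∀ u ∈ X', ∀ v ∈ Y', χ u v = c := by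
  classical
  obtain ⟨X₀, hX₀, hX₀card⟩ := exists_subset_card_eq hX
  -- first make the colour profile `X₀ → κ` constant on `Y'`
  obtain ⟨f, Y', hY', hY'card, hf⟩ := exists_subset_card_eq_of_card_mul_le
    (fun v (u : X₀) => χ u v) (by simpa [hX₀card, mul_comm] using hY)
  obtain ⟨c, X', -, hX'card, hc⟩ := exists_subset_card_eq_of_card_mul_le (s := X₀.attach) f
    (by simpa [hX₀card, mul_comm] using le_rfl)
  refine ⟨X'.map (Function.Embedding.subtype _), fun u hu => ?_, Y', hY', by simpa, hY'card,
    c, ?_⟩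
  · obtain ⟨u, -, rfl⟩ := mem_map.1 hu
    exact hX₀ u.2
  · simp only [mem_map, Function.Embedding.subtype_apply, forall_exists_index, and_imp]
    rintro _ u hu rfl v hv
    rw [← hc u hu, ← hf v hv]

theorem exists_endHomogeneous_subset [LinearOrder α] [Fintype κ] [Nonempty κ] (χ : α → α → κ)
    (m : ℕ) {Z : Finset α} (hZ : (card κ + 1) ^ m ≤ #Z) :
    ∃ T ⊆ Z, #T = m ∧ ∀ u ∈ T, ∃ c, ∀ v ∈ T, u < v → χ u v = c := by
  induction m generalizing Z with
  | zero => exact ⟨∅, empty_subset _, rfl, by simp⟩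
  | succ m ih =>
    have hZne : Z.Nonempty := card_pos.1 (lt_of_lt_of_le (by positivity) hZ)
    set z := Z.min' hZne
    obtain ⟨b, Z', hZ', hZ'card, hb⟩ := exists_subset_card_eq_of_card_mul_le (s := Z.erase z)
      (χ z) (k := (card κ + 1) ^ m) (by
        rw [card_erase_of_mem (Z.min'_mem hZne)]
        have := Nat.one_le_pow m (card κ + 1) (by omega)
        rw [pow_succ] at hZ
        exact Nat.le_sub_one_of_lt (by nlinarith))
    obtain ⟨T, hT, rfl, hTc⟩ := ih hZ'card.ge
    have hzT : z ∉ T := fun h => (mem_erase.1 (hZ' (hT h))).1 rfl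
    refine ⟨insert z T, insert_subset (Z.min'_mem hZne) ((hT.trans hZ').trans (erase_subset _ _)),
      card_insert_of_notMem hzT, fun u hu => ?_⟩
    have hlt : ∀ v ∈ T, z < v := fun v hv => lt_of_le_of_ne
      (Z.min'_le v (erase_subset _ _ (hZ' (hT hv)))) (ne_of_mem_of_not_mem hv hzT).symm
    rcases mem_insert.1 hu with rfl | hu
    · exact ⟨b, fun v hv hzv => hb v (hT ((mem_insert.1 hv).resolve_left hzv.ne'))⟩
    · obtain ⟨c, hc⟩ := hTc u hu
      exact ⟨c, fun v hv huv =>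
        hc v ((mem_insert.1 hv).resolve_left fun hvz => (hlt u hu).asymm (hvz ▸ huv)) huv⟩

theorem exists_monochromatic_subset [LinearOrder α] [Fintype κ] [Nonempty κ] (χ : α → α → κ)
    (hχ : ∀ u v, χ u v = χ v u) (k : ℕ) {Z : Finset α} (hZ : (card κ + 1) ^ (card κ * k) ≤ #Z) :
    ∃ Y ⊆ Z, #Y = k ∧ ∃ c, ∀ u ∈ Y, ∀ v ∈ Y, u ≠ v → χ u v = c := by
  obtain ⟨T, hTZ, hTcard, hT⟩ := exists_endHomogeneous_subset χ _ hZ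
  choose! col hcol using hT
  obtain ⟨c, Y, hYT, hYcard, hYc⟩ := exists_subset_card_eq_of_card_mul_le col hTcard.ge
  refine ⟨Y, hYT.trans hTZ, hYcard, c, fun u hu v hv huv => ?_⟩
  rcases huv.lt_or_gt with h | h
  · rw [hcol u (hYT hu) v (hYT hv) h, hYc u hu]
  · rw [hχ, hcol v (hYT hv) u (hYT hu) h, hYc v hv]

/-- Two parts of this size contain `s`-sets spanning a monochromatic complete bipartite graph,
by `exists_monochromatic_biclique`. -/
def bipartiteRamseyBound (r s : ℕ) : ℕ := s * r ^ (s * r)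

theorem le_bipartiteRamseyBound {r : ℕ} (hr : 0 < r) (s : ℕ) : s ≤ bipartiteRamseyBound r s :=
  Nat.le_mul_of_pos_right s (Nat.pow_pos hr)

theorem mul_le_bipartiteRamseyBound (r s : ℕ) : s * r ≤ bipartiteRamseyBound r s := by
  rcases Nat.eq_zero_or_pos (s * r) with h | h
  · simp [h]
  · exact Nat.mul_le_mul_left s (Nat.le_self_pow h.ne' r)

theorem exists_subfamily_monochromatic_between [DecidableEq ι] [Fintype κ] [Nonempty κ]
    (χ : α → α → κ) (P : Finset (ι × ι)) (hP : ∀ p ∈ P, p.1 ≠ p.2) {s : ℕ} {Z : ι → Finset α}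
    (hZ : ∀ i, (bipartiteRamseyBound (card κ))^[#P] s ≤ #(Z i)) :
    ∃ Z' : ι → Finset α, (∀ i, Z' i ⊆ Z i) ∧ (∀ i, s ≤ #(Z' i)) ∧
      ∀ p ∈ P, ∃ c, ∀ u ∈ Z' p.1, ∀ v ∈ Z' p.2, χ u v = c := by
  induction P using Finset.induction_on generalizing s Z with
  | empty => exact ⟨Z, fun _ => subset_rfl, hZ, by simp⟩
  | insert p P hp ih =>
    simp only [card_insert_of_notMem hp, Function.iterate_succ_apply] at hZ
    obtain ⟨Z₁, hZ₁, hZ₁card, hZ₁P⟩ := ih (fun q hq => hP q (mem_insert_of_mem hq)) hZ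
    obtain ⟨X, hX, Y, hY, hXcard, hYcard, c, hc⟩ := exists_monochromatic_biclique χ
      ((mul_le_bipartiteRamseyBound _ s).trans (hZ₁card p.1)) (hZ₁card p.2)
    have hp' : p.2 ≠ p.1 := (hP p (mem_insert_self p P)).symm
    let Z' i := if i = p.1 then X else if i = p.2 then Y else Z₁ i
    have hZ'Z₁ : ∀ i, Z' i ⊆ Z₁ i := fun i => by
      dsimp only [Z']
      split_ifs with h₁ h₂
      exacts [h₁ ▸ hX, h₂ ▸ hY, subset_rfl]
    refine ⟨Z', fun i => (hZ'Z₁ i).trans (hZ₁ i), fun i => ?_, ?_⟩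
    · dsimp only [Z']
      split_ifs
      exacts [hXcard.ge, hYcard.ge,
        (le_bipartiteRamseyBound Fintype.card_pos s).trans (hZ₁card i)]
    · rintro q hq
      rcases mem_insert.1 hq with rfl | hq
      · exact ⟨c, by simpa [Z', hp'] using hc⟩
      · obtain ⟨c, hc⟩ := hZ₁P q hq
        exact ⟨c, fun u hu v hv => hc u (hZ'Z₁ _ hu) v (hZ'Z₁ _ hv)⟩

def kstThreshold (K S : ℕ) : ℕ := 2 * K * (S + 1) + S * (2 * K) ^ (S + 1)

theorem mul_choose_le_div_mul_choose {n K S : ℕ} (hK : 0 < K) (hn : kstThreshold K S ≤ n) :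
    S * n.choose S ≤ n / K * (n / K).choose S := by
  have hn₁ : 2 * K * (S + 1) ≤ n := le_of_add_le_left hn
  have hn₂ : S * (2 * K) ^ (S + 1) ≤ n := le_of_add_le_right hn
  set D := n / K
  have hnD : n < K * (D + 1) := Nat.lt_mul_div_succ n hK
  have hSD : 2 * S + 1 ≤ D := by
    have : K * (2 * (S + 1)) < K * (D + 1) := by linarith
    have := Nat.lt_of_mul_lt_mul_left this
    omega
  have hn : n ≤ 2 * K * (D - S) := by
    have : S ≤ D := by omega
    zify [this] at hnD hSD ⊢
    nlinarith
  refine Nat.le_of_mul_le_mul_right (c := S.factorial) ?_ S.factorial_pos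
  rw [mul_assoc, mul_assoc, mul_comm (n.choose S), mul_comm (D.choose S),
    ← Nat.descFactorial_eq_factorial_mul_choose, ← Nat.descFactorial_eq_factorial_mul_choose]
  have key : (2 * K) ^ (S + 1) * (S * n ^ S) ≤ (2 * K) ^ (S + 1) * (D * (D - S) ^ S) := calc
    (2 * K) ^ (S + 1) * (S * n ^ S) = S * (2 * K) ^ (S + 1) * n ^ S := by ring
    _ ≤ n * n ^ S := by gcongr
    _ ≤ (2 * K * D) * (2 * K * (D - S)) ^ S := by
      gcongr
      exact hn.trans (Nat.mul_le_mul_left _ (Nat.sub_le D S))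
    _ = (2 * K) ^ (S + 1) * (D * (D - S) ^ S) := by ring
  calc S * n.descFactorial S ≤ S * n ^ S := Nat.mul_le_mul_left S (Nat.descFactorial_le_pow n S)
    _ ≤ D * (D - S) ^ S := Nat.le_of_mul_le_mul_left key (by positivity)
    _ ≤ D * D.descFactorial S := by
      gcongr
      exact le_trans (by gcongr; omega) (Nat.pow_sub_le_descFactorial D S)

namespace SimpleGraph

variable [Fintype V] (G : SimpleGraph V) [DecidableRel G.Adj]

theorem div_le_card_filter_le_degree {K : ℕ} (hG : card V ^ 2 ≤ K * #G.edgeFinset) :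
    card V / K ≤ #{v | card V / K ≤ G.degree v} := by
  set n := card V
  set D := n / K
  set H : Finset V := {v | D ≤ G.degree v}
  have hsum : ∑ v, G.degree v ≤ #H * n + n * D := by
    rw [← sum_filter_add_sum_filter_not univ (fun v => D ≤ G.degree v)]
    gcongr
    · exact (sum_le_card_nsmul _ _ n fun v _ => (G.degree_lt_card_verts v).le).trans_eq rfl
    · refine (sum_le_card_nsmul _ _ D fun v hv => (not_le.1 (mem_filter.1 hv).2).le).trans ?_
      exact Nat.mul_le_mul_right D ((card_filter_le _ _).trans_eq (card_univ))
  rcases Nat.eq_zero_or_pos n with hn | hn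
  · simp [D, hn]
  refine Nat.div_le_of_le_mul (Nat.le_of_mul_le_mul_right ?_ hn)
  have hKD : K * D ≤ n := Nat.mul_div_le n K
  have := G.sum_degrees_eq_twice_card_edges
  nlinarith

theorem exists_complete_bipartite_of_sq_le {S K : ℕ} (hK : 0 < K)
    (hn : kstThreshold K S ≤ card V) (hG : card V ^ 2 ≤ K * #G.edgeFinset) :
    ∃ A B : Finset V, #A = S ∧ #B = S ∧ ∀ u ∈ A, ∀ v ∈ B, G.Adj u v := by
  classical
  set n := card V
  set H : Finset V := {v | n / K ≤ G.degree v}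
  set Ts := (univ : Finset V).powersetCard S
  -- double count the pairs `(T, v)` with `v ∈ H` adjacent to every vertex of the `S`-set `T`
  have hcount : ∑ _T ∈ Ts, S ≤
      ∑ T ∈ Ts, #(H.bipartiteAbove (fun T v => T ⊆ G.neighborFinset v) T) := by
    rw [sum_card_bipartiteAbove_eq_sum_card_bipartiteBelow, sum_const, smul_eq_mul,
      card_powersetCard, card_univ, mul_comm]
    calc S * n.choose S ≤ n / K * (n / K).choose S := mul_choose_le_div_mul_choose hK hn
      _ ≤ ∑ _v ∈ H, (n / K).choose S := by
        rw [sum_const, smul_eq_mul]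
        exact Nat.mul_le_mul_right _ (G.div_le_card_filter_le_degree hG)
      _ ≤ _ := sum_le_sum fun v hv => by
        have : Ts.bipartiteBelow (fun T v => T ⊆ G.neighborFinset v) v =
            (G.neighborFinset v).powersetCard S := by
          ext T; simp [Ts, bipartiteBelow, mem_powersetCard, and_comm]
        rw [this, card_powersetCard, card_neighborFinset_eq_degree]
        exact Nat.choose_le_choose S (mem_filter.1 hv).2
  have hSn : S ≤ n := le_trans (by nlinarith) (le_of_add_le_left hn : 2 * K * (S + 1) ≤ n)
  obtain ⟨T, hT, hST⟩ :=
    exists_le_of_sum_le (powersetCard_nonempty.2 (by rwa [card_univ])) hcount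
  obtain ⟨A, hA, hAcard⟩ := exists_subset_card_eq hST
  refine ⟨A, T, hAcard, (mem_powersetCard.1 hT).2, fun u hu v hv => ?_⟩
  have := (mem_filter.1 (hA hu)).2 hv
  rwa [mem_neighborFinset] at this

end SimpleGraph

theorem SimpleGraph.card_filter_lt_adj_le_card_edgeFinset [Fintype V] [LinearOrder V]
    (G : SimpleGraph V) [DecidableRel G.Adj] :
    #{p : V × V | p.1 < p.2 ∧ G.Adj p.1 p.2} ≤ #G.edgeFinset := by
  refine card_le_card_of_injOn (fun p => s(p.1, p.2)) (fun p hp => ?_) fun p hp q hq h => ?_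
  · simpa using (mem_filter.1 hp).2.2
  · obtain ⟨-, hp⟩ := mem_filter.1 hp
    obtain ⟨-, hq⟩ := mem_filter.1 hq
    rcases Sym2.eq_iff.1 h with ⟨h₁, h₂⟩ | ⟨h₁, h₂⟩
    · exact Prod.ext h₁ h₂
    · exact absurd (h₁ ▸ h₂ ▸ hp.1) (not_lt.2 hq.1.le)

theorem card_filter_le_card_filter_notMem_add [Fintype α] [DecidableEq α] (P : α × α → Prop)
    [DecidablePred P] (U : Finset α) :
    #{p | P p} ≤ #{p | P p ∧ p.1 ∉ U ∧ p.2 ∉ U} + 2 * (#U * card α) := calc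
  #{p | P p} ≤ #(({p | P p ∧ p.1 ∉ U ∧ p.2 ∉ U} : Finset (α × α)) ∪ (U ×ˢ univ ∪ univ ×ˢ U)) :=
    card_le_card fun p hp => by
      by_cases h₁ : p.1 ∈ U <;> by_cases h₂ : p.2 ∈ U <;> simp_all
  _ ≤ #{p | P p ∧ p.1 ∉ U ∧ p.2 ∉ U} + (#(U ×ˢ univ) + #(univ ×ˢ U)) :=
    (card_union_le _ _).trans (Nat.add_le_add_left (card_union_le _ _) _)
  _ = _ := by simp only [card_product, card_univ]; ring

theorem le_ceil_inv_mul_of_mul_le {ε : ℝ} (hε : 0 < ε) {m x : ℕ} (h : ε * m ≤ x) :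
    m ≤ ⌈ε⁻¹⌉₊ * x := by
  have : (m : ℝ) ≤ ⌈ε⁻¹⌉₊ * x := calc
    (m : ℝ) = ε⁻¹ * (ε * m) := by field_simp
    _ ≤ ε⁻¹ * x := by gcongr
    _ ≤ ⌈ε⁻¹⌉₊ * x := by gcongr; exact Nat.le_ceil _
  exact_mod_cast this

/-- `4 * K * m + 1` absorbs the edges at `m` deleted vertices, at the cost of a factor `4` in
the density. -/
def bicliqueThreshold (K S m : ℕ) : ℕ :=
  2 * (4 * K * m + 1) + kstThreshold (4 * K) S

theorem exists_monochromatic_biclique_avoiding [Fintype α] [LinearOrder α] [DecidableEq κ]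
    (χ : α → α → κ) (hχ : ∀ u v, χ u v = χ v u) {c : κ} {K S m : ℕ} (hK : 0 < K)
    (hc : (card α).choose 2 ≤ K * #{p : α × α | p.1 < p.2 ∧ χ p.1 p.2 = c})
    (hn : bicliqueThreshold K S m ≤ card α) {U : Finset α} (hU : #U ≤ m) :
    ∃ A B : Finset α, Disjoint A B ∧ Disjoint (A ∪ B) U ∧ #A = S ∧ #B = S ∧
      ∀ u ∈ A, ∀ v ∈ B, χ u v = c := by
  classical
  set n := card α
  let G := SimpleGraph.fromRel fun u v => u ∉ U ∧ v ∉ U ∧ χ u v = c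
  have hG : n ^ 2 ≤ 4 * K * #G.edgeFinset := by
    have h₁ :=
      card_filter_le_card_filter_notMem_add (fun p : α × α => p.1 < p.2 ∧ χ p.1 p.2 = c) U
    have h₂ : #{p : α × α | (p.1 < p.2 ∧ χ p.1 p.2 = c) ∧ p.1 ∉ U ∧ p.2 ∉ U} ≤ #G.edgeFinset :=
      (card_le_card fun p hp => by
        simp only [mem_filter, mem_univ, true_and] at hp ⊢
        exact ⟨hp.1.1, hp.1.1.ne, .inl ⟨hp.2.1, hp.2.2, hp.1.2⟩⟩).trans
        G.card_filter_lt_adj_le_card_edgeFinset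
    have h₃ : 2 * n.choose 2 + n = n * n := by
      rw [Nat.choose_two_right, Nat.mul_div_cancel' (Nat.even_mul_pred_self n).two_dvd]
      rcases n with _ | n <;> simp [Nat.mul_succ]
    have h₄ : 2 * (4 * K * m + 1) * n ≤ n * n := Nat.mul_le_mul_right n (le_of_add_le_left hn)
    have h₅ : K * (#U * n) ≤ K * (m * n) := by gcongr
    nlinarith
  obtain ⟨A, B, hA, hB, hAB⟩ := G.exists_complete_bipartite_of_sq_le (S := S) (by positivity)
    (le_of_add_le_right hn) hG
  have hAdj : ∀ u v, G.Adj u v → u ∉ U ∧ v ∉ U ∧ χ u v = c := by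
    intro u v h
    rcases ((SimpleGraph.fromRel_adj _ _ _).1 h).2 with h | ⟨hv, hu, h⟩
    exacts [h, ⟨hu, hv, hχ u v ▸ h⟩]
  have hne : A.Nonempty ↔ B.Nonempty := by
    rw [← Finset.card_pos, ← Finset.card_pos, hA, hB]
  refine ⟨A, B, disjoint_left.2 fun x hxA hxB => G.irrefl (hAB x hxA x hxB), ?_, hA, hB,
    fun u hu v hv => (hAdj u v (hAB u hu v hv)).2.2⟩
  refine disjoint_left.2 fun x hx hxU => ?_
  rcases mem_union.1 hx with hx | hx
  · obtain ⟨v, hv⟩ := hne.1 ⟨x, hx⟩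
    exact (hAdj x v (hAB x hx v hv)).1 hxU
  · obtain ⟨u, hu⟩ := hne.2 ⟨x, hx⟩
    exact (hAdj u x (hAB u hu x hx)).2.1 hxU

theorem exists_pairwise_disjoint_of_forall_exists_disjoint [Fintype κ]
    {P : κ → Finset α → Prop} {m : ℕ}
    (h : ∀ c (U : Finset α), #U ≤ m * card κ → ∃ X, P c X ∧ #X ≤ m ∧ Disjoint X U) :
    ∃ X : κ → Finset α, (∀ c, P c (X c)) ∧ Pairwise (Disjoint on X) := by
  classical
  suffices ∀ C : Finset κ, ∃ X : κ → Finset α, (∀ c ∈ C, P c (X c) ∧ #(X c) ≤ m) ∧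
      ∀ c ∈ C, ∀ d ∈ C, c ≠ d → Disjoint (X c) (X d) by
    obtain ⟨X, hP, hX⟩ := this univ
    exact ⟨X, fun c => (hP c (mem_univ c)).1, fun c d hcd => hX c (mem_univ c) d (mem_univ d) hcd⟩
  intro C
  induction C using Finset.induction_on with
  | empty => exact ⟨fun _ => ∅, by simp, by simp⟩
  | insert c C hc ih =>
    obtain ⟨X, hP, hX⟩ := ih
    have hU : #(C.biUnion X) ≤ m * card κ := calc
      #(C.biUnion X) ≤ ∑ d ∈ C, #(X d) := card_biUnion_le
      _ ≤ #C * m := sum_le_card_nsmul _ _ _ fun d hd => (hP d hd).2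
      _ ≤ m * card κ := by rw [mul_comm]; exact Nat.mul_le_mul_left m (card_le_univ C)
    obtain ⟨Y, hY, hYcard, hYU⟩ := h c _ hU
    have hYX : ∀ d ∈ C, Disjoint Y (X d) := fun d hd =>
      hYU.mono_right (subset_biUnion_of_mem X hd)
    have hne : ∀ d ∈ C, d ≠ c := fun d hd h => hc (h ▸ hd)
    refine ⟨Function.update X c Y, fun d hd => ?_, fun d hd e he hde => ?_⟩
    · rcases mem_insert.1 hd with rfl | hd
      · simpa using ⟨hY, hYcard⟩
      · simpa [hne d hd] using hP d hd
    · rcases mem_insert.1 hd with rfl | hd' <;> rcases mem_insert.1 he with rfl | he'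
      · exact absurd rfl hde
      · simpa [hne e he'] using hYX e he'
      · simpa [hne d hd'] using (hYX d hd').symm
      · simpa [hne d hd', hne e he'] using hX d hd' e he' hde

theorem pairwise_disjoint_sumElim [DecidableEq α] {A B : κ → Finset α}
    (h : Pairwise (Disjoint on fun c => A c ∪ B c)) (hAB : ∀ c, Disjoint (A c) (B c)) :
    Pairwise (Disjoint on Sum.elim A B) := by
  rintro (c | c) (d | d) hcd <;> simp only [Function.onFun, Sum.elim_inl, Sum.elim_inr]
  · exact (h fun h' => hcd (congrArg Sum.inl h')).mono subset_union_left subset_union_left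
  · rcases eq_or_ne c d with rfl | hcd
    exacts [hAB c, (h hcd).mono subset_union_left subset_union_right]
  · rcases eq_or_ne c d with rfl | hcd
    exacts [(hAB c).symm, (h hcd).mono subset_union_right subset_union_left]
  · exact (h fun h' => hcd (congrArg Sum.inr h')).mono subset_union_right subset_union_right

theorem exists_disjoint_monochromatic_bicliques [Fintype α] [LinearOrder α] [Fintype κ]
    [DecidableEq κ] (χ : α → α → κ) (hχ : ∀ u v, χ u v = χ v u) {K S : ℕ} (hK : 0 < K)
    (hc : ∀ c, (card α).choose 2 ≤ K * #{p : α × α | p.1 < p.2 ∧ χ p.1 p.2 = c})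
    (hn : bicliqueThreshold K S (2 * S * card κ) ≤ card α) :
    ∃ Z : κ ⊕ κ → Finset α, Pairwise (Disjoint on Z) ∧ (∀ i, #(Z i) = S) ∧
      ∀ c, ∀ u ∈ Z (Sum.inl c), ∀ v ∈ Z (Sum.inr c), χ u v = c := by
  obtain ⟨X, hX, hXdisj⟩ := exists_pairwise_disjoint_of_forall_exists_disjoint (m := 2 * S)
    (P := fun c X => ∃ A B, X = A ∪ B ∧ Disjoint A B ∧ #A = S ∧ #B = S ∧
      ∀ u ∈ A, ∀ v ∈ B, χ u v = c) fun c U hU => by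
    obtain ⟨A, B, hAB, hABU, hA, hB, hc⟩ :=
      exists_monochromatic_biclique_avoiding χ hχ hK (hc c) hn hU
    exact ⟨A ∪ B, ⟨A, B, rfl, hAB, hA, hB, hc⟩, (card_union_le A B).trans (by omega), hABU⟩
  choose A B hXAB hAB hA hB hcol using hX
  obtain rfl : X = fun c => A c ∪ B c := funext hXAB
  exact ⟨Sum.elim A B, pairwise_disjoint_sumElim hXdisj hAB, Sum.forall.2 ⟨hA, hB⟩, hcol⟩

def IsFullyCompleteMultipartite (χ : α → α → κ) (Y : ι → Finset α) (cin : ι → κ)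
    (cbet : ι → ι → κ) : Prop :=
  (∀ i j, i ≠ j → Disjoint (Y i) (Y j)) ∧
    (∀ i, ∀ u ∈ Y i, ∀ v ∈ Y i, u ≠ v → χ u v = cin i) ∧
    ∀ i j, i ≠ j → ∀ u ∈ Y i, ∀ v ∈ Y j, χ u v = cbet i j

/-- One shrinking step per ordered pair of the `2 * card κ` parts, down to the Ramsey bound for
monochromatic `k`-cliques. -/
def fullyCompleteMultipartiteThreshold (κ : Type*) [Fintype κ] (k : ℕ) : ℕ :=
  (bipartiteRamseyBound (card κ))^[#(univ : Finset (κ ⊕ κ)).offDiag] ((card κ + 1) ^ (card κ * k))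

theorem exists_isFullyCompleteMultipartite [LinearOrder α] [Fintype κ] [Nonempty κ]
    (χ : α → α → κ) (hχ : ∀ u v, χ u v = χ v u) {k : ℕ} (hk : 0 < k) {Z : κ ⊕ κ → Finset α}
    (hZ : Pairwise (Disjoint on Z)) (hZcard : ∀ i, fullyCompleteMultipartiteThreshold κ k ≤ #(Z i))
    (hZcol : ∀ c, ∀ u ∈ Z (Sum.inl c), ∀ v ∈ Z (Sum.inr c), χ u v = c) :
    ∃ Y cin cbet, IsFullyCompleteMultipartite χ Y cin cbet ∧ (∀ i, #(Y i) = k) ∧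
      ∀ c, cbet (Sum.inl c) (Sum.inr c) = c := by
  classical
  obtain ⟨Z', hZ'Z, hZ'card, hZ'⟩ := exists_subfamily_monochromatic_between χ univ.offDiag
    (fun p hp => (mem_offDiag.1 hp).2.2) hZcard
  choose Y hYZ hYcard cin hcin using fun i => exists_monochromatic_subset χ hχ k (hZ'card i)
  have hYZ' : ∀ i, Y i ⊆ Z i := fun i => (hYZ i).trans (hZ'Z i)
  have : ∀ i j, ∃ c, i ≠ j → ∀ u ∈ Y i, ∀ v ∈ Y j, χ u v = c := fun i j => by
    by_cases hij : i = j
    · exact ⟨Classical.arbitrary κ, fun h => absurd hij h⟩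
    · obtain ⟨c, hc⟩ := hZ' (i, j) (mem_offDiag.2 ⟨mem_univ _, mem_univ _, hij⟩)
      exact ⟨c, fun _ u hu v hv => hc u (hYZ i hu) v (hYZ j hv)⟩
  choose cbet hcbet using this
  refine ⟨Y, cin, cbet, ⟨fun i j hij => (hZ hij).mono (hYZ' i) (hYZ' j), hcin, hcbet⟩, hYcard,
    fun c => ?_⟩
  obtain ⟨u, hu⟩ := Finset.card_pos.1 ((hYcard (.inl c)).symm ▸ hk)
  obtain ⟨v, hv⟩ := Finset.card_pos.1 ((hYcard (.inr c)).symm ▸ hk)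
  rw [← hcbet _ _ Sum.inl_ne_inr u hu v hv]
  exact hZcol c u (hYZ' _ hu) v (hYZ' _ hv)

theorem stmt_16_general (r : ℕ) (hr : 2 ≤ r) (ε : ℝ) (hε0 : 0 < ε)
    (k : ℕ) (hk : 1 ≤ k) :
    ∃ N : ℕ, ∀ (n : ℕ), N ≤ n →
      ∀ (χ : Fin n → Fin n → Fin r), (∀ u v : Fin n, χ u v = χ v u) →
      (∀ c : Fin r, ε * (n.choose 2 : ℝ) ≤
        ((Finset.univ.filter fun p : Fin n × Fin n =>
          p.1 < p.2 ∧ χ p.1 p.2 = c).card : ℝ)) →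
      ∃ (Y : Fin (2 * r) → Finset (Fin n)) (cin : Fin (2 * r) → Fin r)
        (cbet : Fin (2 * r) → Fin (2 * r) → Fin r),
        (∀ i j : Fin (2 * r), i ≠ j → Disjoint (Y i) (Y j)) ∧
        (∀ i : Fin (2 * r), (Y i).card = k) ∧
        (∀ i : Fin (2 * r), ∀ u ∈ Y i, ∀ v ∈ Y i, u ≠ v → χ u v = cin i) ∧
        (∀ i j : Fin (2 * r), i ≠ j → ∀ u ∈ Y i, ∀ v ∈ Y j, χ u v = cbet i j) ∧
        (∀ c : Fin r, (∃ i, cin i = c) ∨ ∃ i j, i ≠ j ∧ cbet i j = c) := by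
  have : Nonempty (Fin r) := ⟨⟨0, by omega⟩⟩
  set S := fullyCompleteMultipartiteThreshold (Fin r) k
  refine ⟨bicliqueThreshold ⌈ε⁻¹⌉₊ S (2 * S * r), fun n hn χ hχ hbal => ?_⟩
  obtain ⟨Z, hZ, hZcard, hZcol⟩ := exists_disjoint_monochromatic_bicliques χ hχ
    (Nat.ceil_pos.2 (inv_pos.2 hε0))
    (fun c => by simpa using le_ceil_inv_mul_of_mul_le hε0 (hbal c)) (by simpa using hn)
  obtain ⟨Y, cin, cbet, ⟨hdisj, hin, hbet⟩, hYcard, hall⟩ :=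
    exists_isFullyCompleteMultipartite χ hχ hk hZ (fun i => (hZcard i).ge) hZcol
  let e : Fin (2 * r) ≃ Fin r ⊕ Fin r := (finCongr (two_mul r)).trans finSumFinEquiv.symm
  refine ⟨Y ∘ e, cin ∘ e, fun i j => cbet (e i) (e j),
    fun i j hij => hdisj _ _ (e.injective.ne hij), fun i => hYcard _, fun i => hin _,
    fun i j hij => hbet _ _ (e.injective.ne hij),
    fun c => .inr ⟨e.symm (.inl c), e.symm (.inr c), by simp, by simp [hall]⟩⟩

/-- For every `r ≥ 2`, `0 < ε < 1/r` and `k ≥ 1`, there exists `N` such that every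
`ε`-balanced `r`-edge-coloring of `K_n` with `n ≥ N` contains `2r` disjoint vertex sets,
each a monochromatic clique of size `k`, with all bipartite graphs between them
monochromatic (a fully-complete multipartite subgraph) which uses all `r` colors.
In particular `R_ε^r(F_k^r)` is finite. -/
theorem stmt_16 (r : ℕ) (hr : 2 ≤ r) (ε : ℝ) (hε0 : 0 < ε) (hε1 : ε < 1 / r)
    (k : ℕ) (hk : 1 ≤ k) :
    ∃ N : ℕ, ∀ (n : ℕ), N ≤ n →
      ∀ (χ : Fin n → Fin n → Fin r), (∀ u v : Fin n, χ u v = χ v u) →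
      (∀ c : Fin r, ε * (n.choose 2 : ℝ) ≤
        ((Finset.univ.filter fun p : Fin n × Fin n =>
          p.1 < p.2 ∧ χ p.1 p.2 = c).card : ℝ)) →
      ∃ (Y : Fin (2 * r) → Finset (Fin n)) (cin : Fin (2 * r) → Fin r)
        (cbet : Fin (2 * r) → Fin (2 * r) → Fin r),
        (∀ i j : Fin (2 * r), i ≠ j → Disjoint (Y i) (Y j)) ∧
        (∀ i : Fin (2 * r), (Y i).card = k) ∧
        (∀ i : Fin (2 * r), ∀ u ∈ Y i, ∀ v ∈ Y i, u ≠ v → χ u v = cin i) ∧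
        (∀ i j : Fin (2 * r), i ≠ j → ∀ u ∈ Y i, ∀ v ∈ Y j, χ u v = cbet i j) ∧
        (∀ c : Fin r, (∃ i, cin i = c) ∨ ∃ i j, i ≠ j ∧ cbet i j = c) :=
  stmt_16_general r hr ε hε0 k hk
end

section
/- Let X be a perfect Polish space and f : [X]² → [r] a Baire measurable coloring such that each color class is non-meagre in X². Then there exist disjoint Cantor sets C₁,…,C_s ⊆ X (for some s ≤ 2r) such that each [C_i]² is monochromatic, each bipartite pair C_i × C_j is monochromatic, and all r colors appear among these cliques and bipartite graphs. -/
/-!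
Off a meagre set the colouring agrees with an open colouring `O`, which can be taken symmetric,
and the comeagre set `G` where they agree contains `⋂ n, W n` for dense open sets `W n`. Since
`⋃ c, O c` is dense and there are finitely many colours, every nonempty open set contains a box
over whose diagonal some `O c` accumulates, and such a box contains two disjoint boxes whose
product lies in `O c`.

A fusion argument then grows `2r` Cantor sets. Start with disjoint boxes `(c, false)`,
`(c, true)` for each colour `c`, with product inside `O c`. At stage `n`, split every box into
two as above and shrink all boxes so that they are small and the products of distinct boxes lie
in `W n`. Two distinct points of the limit sets sit in distinct boxes from some stage on, so the
pair lies in `G` and in the open colour attached to those boxes, which is inherited from the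
root boxes.
-/

open Set Filter Topology Function Metric
open scoped ENNReal

namespace BalancedRamsey

theorem cond_prod_cond_subset {X : Type*} {S : Set (X × X)} (hS : ∀ x y, (x, y) ∈ S → (y, x) ∈ S)
    {U V : Set X} (h : U ×ˢ V ⊆ S) {b b' : Bool} (hb : b ≠ b') :
    (bif b then V else U) ×ˢ (bif b' then V else U) ⊆ S := by
  cases b <;> cases b' <;> simp only [ne_eq, not_true_eq_false] at hb
  · exact h
  · exact fun p hp => hS _ _ (h ⟨hp.2, hp.1⟩)

section Shrinking

variable {X : Type*} [TopologicalSpace X]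

structure IsShrinkable (P : Set X → Set X → Prop) : Prop where
  anti : ∀ ⦃U V U' V' : Set X⦄, U' ⊆ U → V' ⊆ V → P U V → P U' V'
  exists_subset : ∀ ⦃U V : Set X⦄, IsOpen U → U.Nonempty → IsOpen V → V.Nonempty →
    ∃ U' ⊆ U, ∃ V' ⊆ V, IsOpen U' ∧ U'.Nonempty ∧ IsOpen V' ∧ V'.Nonempty ∧ P U' V'

theorem IsShrinkable.and {P Q : Set X → Set X → Prop} (hP : IsShrinkable P)
    (hQ : IsShrinkable Q) : IsShrinkable fun U V => P U V ∧ Q U V where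
  anti _ _ _ _ hU hV h := ⟨hP.anti hU hV h.1, hQ.anti hU hV h.2⟩
  exists_subset U V hU hUne hV hVne := by
    obtain ⟨U₁, hU₁, V₁, hV₁, hU₁o, hU₁ne, hV₁o, hV₁ne, hP₁⟩ := hP.exists_subset hU hUne hV hVne
    obtain ⟨U₂, hU₂, V₂, hV₂, hU₂o, hU₂ne, hV₂o, hV₂ne, hQ₂⟩ :=
      hQ.exists_subset hU₁o hU₁ne hV₁o hV₁ne
    exact ⟨U₂, hU₂.trans hU₁, V₂, hV₂.trans hV₁, hU₂o, hU₂ne, hV₂o, hV₂ne,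
      hP.anti hU₂ hV₂ hP₁, hQ₂⟩

theorem exists_prod_subset_of_isOpen {S : Set (X × X)} (hS : IsOpen S) {U V : Set X}
    (hU : IsOpen U) (hV : IsOpen V) (h : (U ×ˢ V ∩ S).Nonempty) :
    ∃ U' ⊆ U, ∃ V' ⊆ V, IsOpen U' ∧ U'.Nonempty ∧ IsOpen V' ∧ V'.Nonempty ∧ U' ×ˢ V' ⊆ S := by
  obtain ⟨⟨x, y⟩, ⟨hx, hy⟩, hxy⟩ := h
  obtain ⟨u, v, hu, hv, hxu, hyv, huv⟩ := isOpen_prod_iff.1 hS x y hxy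
  exact ⟨U ∩ u, inter_subset_left, V ∩ v, inter_subset_left, hU.inter hu, ⟨x, hx, hxu⟩,
    hV.inter hv, ⟨y, hy, hyv⟩, (prod_mono inter_subset_right inter_subset_right).trans huv⟩

theorem isShrinkable_prod_subset {W : Set (X × X)} (hW : IsOpen W) (hWd : Dense W) :
    IsShrinkable fun U V => U ×ˢ V ⊆ W where
  anti _ _ _ _ hU hV h := (prod_mono hU hV).trans h
  exists_subset _ _ hU hUne hV hVne :=
    exists_prod_subset_of_isOpen hW hU hV (hWd.inter_open_nonempty _ (hU.prod hV) (hUne.prod hVne))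

theorem isShrinkable_exists_prod_subset {γ : Type*} {O : γ → Set (X × X)}
    (hO : ∀ c, IsOpen (O c)) (hOd : Dense (⋃ c, O c)) :
    IsShrinkable fun U V => ∃ c, U ×ˢ V ⊆ O c where
  anti _ _ _ _ hU hV := fun ⟨c, h⟩ => ⟨c, (prod_mono hU hV).trans h⟩
  exists_subset U V hU hUne hV hVne := by
    obtain ⟨p, hpUV, hpO⟩ := hOd.inter_open_nonempty _ (hU.prod hV) (hUne.prod hVne)
    obtain ⟨c, hc⟩ := mem_iUnion.1 hpO
    obtain ⟨U', hU', V', hV', h⟩ := exists_prod_subset_of_isOpen (hO c) hU hV ⟨p, hpUV, hc⟩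
    exact ⟨U', hU', V', hV', h.1, h.2.1, h.2.2.1, h.2.2.2.1, c, h.2.2.2.2⟩

theorem _root_.IsOpen.exists_mem_ne [PerfectSpace X] {V : Set X} (hV : IsOpen V)
    (hne : V.Nonempty) (x : X) : ∃ y ∈ V, y ≠ x := by
  obtain ⟨z, hz⟩ := hne
  obtain rfl | hzx := eq_or_ne z x
  · have : V ∩ {z}ᶜ ∈ 𝓝[≠] z :=
      inter_mem (mem_nhdsWithin_of_mem_nhds (hV.mem_nhds hz)) self_mem_nhdsWithin
    obtain ⟨y, hyV, hyz⟩ := Filter.nonempty_of_mem this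
    exact ⟨y, hyV, hyz⟩
  · exact ⟨z, hz, hzx⟩

theorem isShrinkable_disjoint [T2Space X] [PerfectSpace X] :
    IsShrinkable (Disjoint : Set X → Set X → Prop) where
  anti _ _ _ _ hU hV h := h.mono hU hV
  exists_subset U V hU hUne hV hVne := by
    obtain ⟨x, hx⟩ := hUne
    obtain ⟨y, hy, hyx⟩ := hV.exists_mem_ne hVne x
    obtain ⟨u, v, hu, hv, hxu, hyv, huv⟩ := t2_separation hyx.symm
    exact ⟨U ∩ u, inter_subset_left, V ∩ v, inter_subset_left, hU.inter hu, ⟨x, hx, hxu⟩,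
      hV.inter hv, ⟨y, hy, hyv⟩, huv.mono inter_subset_right inter_subset_right⟩

theorem IsShrinkable.exists_pairwise {P : Set X → Set X → Prop} (hP : IsShrinkable P)
    {ι : Type*} [Finite ι] {L : ι → Set X} (hLo : ∀ i, IsOpen (L i))
    (hLne : ∀ i, (L i).Nonempty) :
    ∃ L' ≤ L, (∀ i, IsOpen (L' i)) ∧ (∀ i, (L' i).Nonempty) ∧
      Pairwise fun i j => P (L' i) (L' j) := by
  classical
  cases nonempty_fintype ι
  suffices ∀ s : Finset (ι × ι), ∃ L' ≤ L, (∀ i, IsOpen (L' i)) ∧ (∀ i, (L' i).Nonempty) ∧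
      ∀ p ∈ s, p.1 ≠ p.2 → P (L' p.1) (L' p.2) by
    obtain ⟨L', hle, hL'o, hL'ne, hL'P⟩ := this Finset.univ
    exact ⟨L', hle, hL'o, hL'ne, fun i j h => hL'P (i, j) (Finset.mem_univ _) h⟩
  intro s
  induction s using Finset.induction_on with
  | empty => exact ⟨L, le_rfl, hLo, hLne, by simp⟩
  | insert q s _ ih =>
    obtain ⟨L', hle, hL'o, hL'ne, hL'P⟩ := ih
    obtain ⟨i, j⟩ := q
    by_cases hij : i = j
    · refine ⟨L', hle, hL'o, hL'ne, fun p hp hp' => ?_⟩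
      obtain rfl | hp := Finset.mem_insert.1 hp
      exacts [(hp' hij).elim, hL'P p hp hp']
    obtain ⟨U, hU, V, hV, hUo, hUne, hVo, hVne, hUV⟩ :=
      hP.exists_subset (hL'o i) (hL'ne i) (hL'o j) (hL'ne j)
    set L'' := update (update L' i U) j V
    have hL''i : L'' i = U := by simp [L'', update_of_ne hij]
    have hL''j : L'' j = V := by simp [L'']
    have hupdate : ∀ Q : ι → Set X → Prop, Q i U → Q j V → (∀ k, Q k (L' k)) →
        ∀ k, Q k (L'' k) := fun Q hi hj hk =>
      (forall_update_iff _ Q).2 ⟨hj, fun k _ => (forall_update_iff _ Q).2 ⟨hi, fun k _ => hk k⟩ k⟩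
    have hle' : L'' ≤ L' := hupdate (fun k s => s ⊆ L' k) hU hV fun _ => subset_rfl
    refine ⟨L'', hle'.trans hle, hupdate (fun _ => IsOpen) hUo hVo hL'o,
      hupdate (fun _ => Set.Nonempty) hUne hVne hL'ne, fun p hp hp' => ?_⟩
    · obtain rfl | hp := Finset.mem_insert.1 hp
      · rw [hL''i, hL''j]
        exact hUV
      · exact hP.anti (hle' _) (hle' _) (hL'P p hp hp')

end Shrinking

section Layers

variable {X : Type*} [TopologicalSpace X] {γ ι : Type*}

/-- A stage of the fusion: `col i j` is the colour to be realised between points grown inside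
`L i` and `L j` (inside `L i` if `i = j`). The last field is what allows each box to be split into
two boxes whose product has colour `col i i`. -/
structure IsColoredLayer (O : γ → Set (X × X)) (col : ι → ι → γ) (W : Set (X × X))
    (L : ι → Set X) : Prop where
  isOpen : ∀ i, IsOpen (L i)
  nonempty : ∀ i, (L i).Nonempty
  pairwise_disjoint : Pairwise (Disjoint on L)
  prod_subset : ∀ ⦃i j⦄, i ≠ j → L i ×ˢ L j ⊆ W ∩ O (col i j)
  diag_mem_closure : ∀ i, ∀ x ∈ L i, (x, x) ∈ closure (O (col i i))

theorem IsColoredLayer.comp_injective {O : γ → Set (X × X)} {col : ι → ι → γ}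
    {W : Set (X × X)} {L : ι → Set X} (hL : IsColoredLayer O col W L) {κ : Type*} {e : κ → ι}
    (he : Injective e) : IsColoredLayer O (fun a b => col (e a) (e b)) W (L ∘ e) where
  isOpen a := hL.isOpen (e a)
  nonempty a := hL.nonempty (e a)
  pairwise_disjoint _ _ h := hL.pairwise_disjoint (he.ne h)
  prod_subset _ _ h := hL.prod_subset (he.ne h)
  diag_mem_closure a := hL.diag_mem_closure (e a)

theorem exists_subset_forall_diag_mem_closure [BaireSpace X] [Finite γ] {O : γ → Set (X × X)}
    (hOd : Dense (⋃ c, O c)) {U : Set X} (hU : IsOpen U) (hUne : U.Nonempty) :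
    ∃ V ⊆ U, IsOpen V ∧ V.Nonempty ∧ ∃ c, ∀ x ∈ V, (x, x) ∈ closure (O c) := by
  -- The closed sets `D c` cover `X`, so by Baire one of them has interior meeting `U`.
  set D : γ → Set X := fun c => (fun x => (x, x)) ⁻¹' closure (O c)
  have hD : ∀ c, IsClosed (D c) := fun c => isClosed_closure.preimage (by fun_prop)
  have hDcover : ⋃ c, D c = univ := by
    refine eq_univ_of_forall fun x => ?_
    have hx : (x, x) ∈ closure (⋃ c, O c) := hOd.closure_eq ▸ mem_univ _
    rw [closure_iUnion_of_finite] at hx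
    simpa [D] using hx
  obtain ⟨x, hxU, hxD⟩ :=
    (dense_iUnion_interior_of_closed hD hDcover).inter_open_nonempty U hU hUne
  obtain ⟨c, hc⟩ := mem_iUnion.1 hxD
  exact ⟨U ∩ interior (D c), inter_subset_left, hU.inter isOpen_interior, ⟨x, hxU, hc⟩, c,
    fun y hy => interior_subset (s := D c) hy.2⟩

theorem exists_base_layer [T2Space X] [BaireSpace X] [PerfectSpace X] [Finite γ]
    {O : γ → Set (X × X)}
    (hO : ∀ c, IsOpen (O c)) (hOsymm : ∀ c x y, (x, y) ∈ O c → (y, x) ∈ O c)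
    (hOd : Dense (⋃ c, O c)) (hOne : ∀ c, (O c).Nonempty) :
    ∃ (L : γ × Bool → Set X) (col : γ × Bool → γ × Bool → γ),
      IsColoredLayer O col univ L ∧ ∀ c, col (c, false) (c, true) = c := by
  classical
  have hbox : ∀ c, ∃ U ⊆ univ, ∃ V ⊆ univ, IsOpen U ∧ U.Nonempty ∧ IsOpen V ∧ V.Nonempty ∧
      U ×ˢ V ⊆ O c := fun c =>
    exists_prod_subset_of_isOpen (hO c) isOpen_univ isOpen_univ (by simpa using hOne c)
  choose U _ V _ hUo hUne hVo hVne hUV using hbox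
  set M : γ × Bool → Set X := fun i => bif i.2 then V i.1 else U i.1
  have hMo : ∀ i, IsOpen (M i) := fun ⟨c, b⟩ => by cases b; exacts [hUo c, hVo c]
  have hMne : ∀ i, (M i).Nonempty := fun ⟨c, b⟩ => by cases b; exacts [hUne c, hVne c]
  obtain ⟨M', hM'M, hM'o, hM'ne, hM'P⟩ :=
    (isShrinkable_disjoint.and (isShrinkable_exists_prod_subset hO hOd)).exists_pairwise hMo hMne
  choose L hLM' hLo hLne d hd using
    fun i => exists_subset_forall_diag_mem_closure hOd (hM'o i) (hM'ne i)
  choose pc hpc using fun i j (h : i ≠ j) => (hM'P h).2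
  -- `(c, false)` and `(c, true)` lie in `U c` and `V c`, whose product is inside `O c`.
  set col : γ × Bool → γ × Bool → γ := fun i j =>
    if h : i = j then d i else if i.1 = j.1 then i.1 else pc i j h
  refine ⟨L, col, ⟨hLo, hLne, fun i j h => (hM'P h).1.mono (hLM' i) (hLM' j), fun i j hij => ?_,
    fun i => by simpa [col] using hd i⟩, fun c => by simp [col]⟩
  refine subset_inter (subset_univ _) ?_
  obtain ⟨c, b⟩ := i
  obtain ⟨c', b'⟩ := j
  obtain rfl | hcc := eq_or_ne c c'
  · simp only [col, dif_neg hij]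
    refine (prod_mono ((hLM' _).trans (hM'M _)) ((hLM' _).trans (hM'M _))).trans ?_
    exact cond_prod_cond_subset (hOsymm c) (hUV c) fun h => hij (congrArg (Prod.mk c) h)
  · simp only [col, dif_neg hij, if_neg hcc]
    exact (prod_mono (hLM' _) (hLM' _)).trans (hpc _ _ hij)

end Layers

section Metric

variable {X : Type*} [MetricSpace X] {γ ι : Type*}

theorem exists_closure_subset_ediam_le {U : Set X} (hU : IsOpen U) (hUne : U.Nonempty)
    {ε : ℝ≥0∞} (hε : 0 < ε) : ∃ V, IsOpen V ∧ V.Nonempty ∧ closure V ⊆ U ∧ ediam V ≤ ε := by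
  obtain ⟨x, hx⟩ := hUne
  obtain ⟨ρ, hρ, hρU⟩ := EMetric.mem_nhds_iff.1 (hU.mem_nhds hx)
  obtain ⟨a, ha, haρ⟩ := exists_between hρ
  set δ := min a (ε / 2)
  have hδ : 0 < δ := lt_min ha (ENNReal.half_pos hε.ne')
  refine ⟨eball x δ, isOpen_eball, ⟨x, mem_eball_self hδ⟩, ?_, ?_⟩
  · refine (closure_minimal eball_subset_closedEBall isClosed_closedEBall).trans fun y hy => hρU ?_
    exact lt_of_le_of_lt (le_trans hy (min_le_left _ _)) haρ
  · calc ediam (eball x δ) ≤ 2 * δ := ediam_eball_le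
      _ ≤ 2 * (ε / 2) := by gcongr; exact min_le_right _ _
      _ = ε := ENNReal.mul_div_cancel two_ne_zero ENNReal.ofNat_ne_top

theorem IsColoredLayer.exists_split [PerfectSpace X] [Finite ι] {O : γ → Set (X × X)}
    {col : ι → ι → γ} {W : Set (X × X)} {L : ι → Set X} (hL : IsColoredLayer O col W L)
    (hO : ∀ c, IsOpen (O c)) (hOsymm : ∀ c x y, (x, y) ∈ O c → (y, x) ∈ O c)
    {W' : Set (X × X)} (hW'o : IsOpen W') (hW'd : Dense W') {ε : ℝ≥0∞} (hε : 0 < ε) :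
    ∃ L' : ι × Bool → Set X, IsColoredLayer O (fun p q => col p.1 q.1) W' L' ∧
      ∀ p, closure (L' p) ⊆ L p.1 ∧ ediam (L' p) ≤ ε := by
  have hsplit : ∀ i, ∃ V₀ ⊆ L i, ∃ V₁ ⊆ L i, IsOpen V₀ ∧ V₀.Nonempty ∧ IsOpen V₁ ∧
      V₁.Nonempty ∧ V₀ ×ˢ V₁ ⊆ O (col i i) := fun i =>
    let ⟨x, hx⟩ := hL.nonempty i
    exists_prod_subset_of_isOpen (hO _) (hL.isOpen i) (hL.isOpen i)
      (mem_closure_iff.1 (hL.diag_mem_closure i x hx) _ ((hL.isOpen i).prod (hL.isOpen i))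
        ⟨hx, hx⟩)
  choose V₀ hV₀ V₁ hV₁ hV₀o hV₀ne hV₁o hV₁ne hV using hsplit
  set M : ι × Bool → Set X := fun p => bif p.2 then V₁ p.1 else V₀ p.1
  have hMsub : ∀ p, M p ⊆ L p.1 := fun ⟨i, b⟩ => by cases b; exacts [hV₀ i, hV₁ i]
  have hMo : ∀ p, IsOpen (M p) := fun ⟨i, b⟩ => by cases b; exacts [hV₀o i, hV₁o i]
  have hMne : ∀ p, (M p).Nonempty := fun ⟨i, b⟩ => by cases b; exacts [hV₀ne i, hV₁ne i]
  choose N hNo hNne hNM hNdiam using fun p => exists_closure_subset_ediam_le (hMo p) (hMne p) hε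
  obtain ⟨L', hL'N, hL'o, hL'ne, hL'P⟩ :=
    (isShrinkable_disjoint.and (isShrinkable_prod_subset hW'o hW'd)).exists_pairwise hNo hNne
  have hL'M : ∀ p, closure (L' p) ⊆ M p := fun p => (closure_mono (hL'N p)).trans (hNM p)
  have hL'L : ∀ p, L' p ⊆ L p.1 := fun p => subset_closure.trans ((hL'M p).trans (hMsub p))
  refine ⟨L', ⟨hL'o, hL'ne, fun p q h => (hL'P h).1, fun p q hpq => ?_, fun p x hx => ?_⟩,
    fun p => ⟨(hL'M p).trans (hMsub p), (ediam_mono (hL'N p)).trans (hNdiam p)⟩⟩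
  · refine subset_inter (hL'P hpq).2 ?_
    obtain ⟨i, b⟩ := p
    obtain ⟨j, b'⟩ := q
    obtain rfl | hij := eq_or_ne i j
    · refine (prod_mono (subset_closure.trans (hL'M _)) (subset_closure.trans (hL'M _))).trans ?_
      exact cond_prod_cond_subset (hOsymm _) (hV i) fun h => hpq (congrArg (Prod.mk i) h)
    · exact (prod_mono (hL'L _) (hL'L _)).trans ((hL.prod_subset hij).trans inter_subset_right)
  · exact hL.diag_mem_closure p.1 x (hL'L p hx)

theorem IsColoredLayer.exists_seq [PerfectSpace X] {κ : Type*} [Finite κ]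
    {O : γ → Set (X × X)} {col : κ → κ → γ} {W : ℕ → Set (X × X)} {L₀ : κ → Set X}
    (h₀ : IsColoredLayer O col (W 0) L₀) (hO : ∀ c, IsOpen (O c))
    (hOsymm : ∀ c x y, (x, y) ∈ O c → (y, x) ∈ O c) (hWo : ∀ n, IsOpen (W n))
    (hWd : ∀ n, Dense (W n)) :
    ∃ L : ∀ n, κ × List.Vector Bool n → Set X,
      (∀ n, IsColoredLayer O (fun a b => col a.1 b.1) (W n) (L n)) ∧
      -- `(0 : ℝ≥0∞)⁻¹ = ⊤`, so layer `0` carries no diameter bound.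
      (∀ n a, ediam (L n a) ≤ (n : ℝ≥0∞)⁻¹) ∧
      ∀ n k b v, closure (L (n + 1) (k, b ::ᵥ v)) ⊆ L n (k, v) := by
  set Good : ∀ n, (κ × List.Vector Bool n → Set X) → Prop := fun n L =>
    IsColoredLayer O (fun a b => col a.1 b.1) (W n) L ∧ ∀ a, ediam (L a) ≤ (n : ℝ≥0∞)⁻¹
  have hstep : ∀ n L, Good n L →
      ∃ L', Good (n + 1) L' ∧ ∀ k b v, closure (L' (k, b ::ᵥ v)) ⊆ L (k, v) := by
    rintro n L ⟨hL, -⟩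
    obtain ⟨L', hL', hL'sub⟩ := hL.exists_split hO hOsymm (hWo (n + 1)) (hWd (n + 1))
      (ε := ((n + 1 : ℕ) : ℝ≥0∞)⁻¹) (by simp)
    set e : κ × List.Vector Bool (n + 1) → (κ × List.Vector Bool n) × Bool :=
      fun a => ((a.1, a.2.tail), a.2.head)
    have he : Injective e := by
      rintro ⟨k, v⟩ ⟨k', v'⟩ h
      simp only [e, Prod.mk.injEq] at h
      obtain ⟨⟨rfl, ht⟩, hh⟩ := h
      rw [← v.cons_head_tail, ← v'.cons_head_tail, ht, hh]
    refine ⟨L' ∘ e, ⟨hL'.comp_injective he, fun a => (hL'sub (e a)).2⟩, fun k b v => ?_⟩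
    simpa [e] using (hL'sub (e (k, b ::ᵥ v))).1
  choose next hnext hnext_sub using hstep
  let seq : ∀ n, {L // Good n L} := fun n => Nat.rec
    ⟨L₀ ∘ Prod.fst, h₀.comp_injective Prod.fst_injective, by simp⟩
    (fun n L => ⟨next n L.1 L.2, hnext n L.1 L.2⟩) n
  exact ⟨fun n => (seq n).1, fun n => (seq n).2.1, fun n => (seq n).2.2,
    fun n => hnext_sub n _ _⟩

theorem exists_continuous_forall_mem_res [CompleteSpace X] {β : Type*} [TopologicalSpace β]
    [DiscreteTopology β] {A : List β → Set X} (hanti : CantorScheme.ClosureAntitone A)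
    (hdiam : CantorScheme.VanishingDiam A) (hne : ∀ l, (A l).Nonempty) :
    ∃ g : (ℕ → β) → X, Continuous g ∧ ∀ x n, g x ∈ A (PiNat.res x n) := by
  have hdom : ∀ x, x ∈ (CantorScheme.inducedMap A).1 := fun x =>
    (hanti.map_of_vanishingDiam hdiam hne).symm ▸ mem_univ x
  exact ⟨fun x => (CantorScheme.inducedMap A).2 ⟨x, hdom x⟩,
    hdiam.map_continuous.comp (continuous_id.subtype_mk hdom),
    fun x n => CantorScheme.map_mem ⟨x, hdom x⟩ n⟩

end Metric

theorem eventually_res_ne {β : Type*} {x y : ℕ → β} (h : x ≠ y) :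
    ∀ᶠ n in atTop, PiNat.res x n ≠ PiNat.res y n := by
  obtain ⟨m, hm⟩ := Function.ne_iff.1 h
  exact eventually_atTop.2 ⟨m + 1, fun n hn hres => hm (PiNat.res_eq_res.1 hres (by omega))⟩

instance {β : Type*} [TopologicalSpace β] [Nontrivial β] : PerfectSpace (ℕ → β) := by
  refine perfectSpace_iff_forall_not_isolated.2 fun x => ?_
  choose b hb using fun n => exists_ne (x n)
  have hu : Tendsto (fun n => update x n (b n)) atTop (𝓝 x) :=
    tendsto_pi_nhds.2 fun i => tendsto_const_nhds.congr'
      (eventually_atTop.2 ⟨i + 1, fun n hn => (update_of_ne (by omega) _ _).symm⟩)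
  refine mem_closure_iff_nhdsWithin_neBot.1 (mem_closure_of_tendsto hu (Eventually.of_forall
    fun n h => hb n ?_))
  rw [← congrFun (h : update x n (b n) = x) n, update_self]

theorem nonempty_isCompact_perfect_isTotallyDisconnected_range {Z Y : Type*}
    [TopologicalSpace Z] [CompactSpace Z] [PerfectSpace Z] [TotallyDisconnectedSpace Z]
    [Nonempty Z] [TopologicalSpace Y] [T2Space Y] {g : Z → Y} (hg : Continuous g)
    (hinj : Injective g) :
    (range g).Nonempty ∧ IsCompact (range g) ∧ Perfect (range g) ∧
      IsTotallyDisconnected (range g) := by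
  refine ⟨range_nonempty g, isCompact_range hg, ⟨(isCompact_range hg).isClosed, ?_⟩,
    (hg.isClosedEmbedding hinj).isEmbedding.isTotallyDisconnected_range.2 inferInstance⟩
  rintro _ ⟨z, rfl⟩
  rw [accPt_iff_frequently]
  exact ((hg.tendsto z).mono_left nhdsWithin_le_nhds).frequently_map g
    (fun y hy => ⟨hinj.ne hy, mem_range_self y⟩) (eventually_mem_nhdsWithin (s := {z}ᶜ)).frequently

section Residual

variable {Y : Type*} [TopologicalSpace Y]

theorem exists_isOpen_eventually_forall_iff {γ : Type*} [Countable γ] {f : Y → γ}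
    (hf : ∀ c, BaireMeasurableSet (f ⁻¹' {c})) :
    ∃ O : γ → Set Y, (∀ c, IsOpen (O c)) ∧ ∀ᶠ p in residual Y, ∀ c, f p = c ↔ p ∈ O c := by
  choose O hO hfO using fun c => (hf c).residualEq_isOpen
  exact ⟨O, hO, eventually_countable_forall.2 fun c => (hfO c).mono fun p hp => Iff.of_eq hp⟩

theorem exists_isOpen_symm_eventually_forall_iff {γ : Type*} [Countable γ] {f : Y × Y → γ}
    (hsymm : ∀ x y, f (x, y) = f (y, x)) (hf : ∀ c, BaireMeasurableSet (f ⁻¹' {c})) :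
    ∃ O : γ → Set (Y × Y), (∀ c, IsOpen (O c)) ∧ (∀ c x y, (x, y) ∈ O c → (y, x) ∈ O c) ∧
      ∀ᶠ p in residual (Y × Y), ∀ c, f p = c ↔ p ∈ O c := by
  obtain ⟨O, hO, hfO⟩ := exists_isOpen_eventually_forall_iff hf
  have hfO_swap : ∀ᶠ p in residual (Y × Y), ∀ c, f p.swap = c ↔ p.swap ∈ O c := by
    rw [← (Homeomorph.prodComm Y Y).residual_map_eq] at hfO
    exact hfO
  refine ⟨fun c => O c ∩ Prod.swap ⁻¹' O c, fun c => (hO c).inter ((hO c).preimage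
    continuous_swap), fun c x y h => ⟨h.2, h.1⟩, ?_⟩
  filter_upwards [hfO, hfO_swap] with p hp hp_swap c
  rw [mem_inter_iff, mem_preimage, ← hp, ← hp_swap, show f p.swap = f p from hsymm p.2 p.1,
    and_self]

theorem exists_seq_isOpen_dense_of_mem_residual [BaireSpace Y] {G : Set Y}
    (hG : G ∈ residual Y) :
    ∃ W : ℕ → Set Y, (∀ n, IsOpen (W n)) ∧ (∀ n, Dense (W n)) ∧ W 0 = univ ∧
      ∀ y, (∀ᶠ n in atTop, y ∈ W n) → y ∈ G := by
  obtain ⟨t, htG, htGδ, htd⟩ := mem_residual.1 hG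
  obtain ⟨f, hfo, rfl⟩ := isGδ_iff_eq_iInter_nat.1 htGδ
  refine ⟨fun n => ⋂ m ∈ Finset.range n, f m, fun n => isOpen_biInter_finset fun m _ => hfo m,
    fun n => htd.mono (subset_iInter₂ fun m _ => iInter_subset _ m), by simp,
    fun y hy => htG (mem_iInter.2 fun m => ?_)⟩
  obtain ⟨n, hyn, hmn⟩ := (hy.and (eventually_gt_atTop m)).exists
  exact mem_iInter₂.1 hyn m (Finset.mem_range.2 hmn)

end Residual

theorem exists_cantor_family {X : Type*} [MetricSpace X] [CompleteSpace X] [PerfectSpace X]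
    {γ : Type*} [Finite γ] {O : γ → Set (X × X)} (hO : ∀ c, IsOpen (O c))
    (hOsymm : ∀ c x y, (x, y) ∈ O c → (y, x) ∈ O c) (hOd : Dense (⋃ c, O c))
    (hOne : ∀ c, (O c).Nonempty) {G : Set (X × X)} (hG : G ∈ residual (X × X)) :
    ∃ (g : γ × Bool → (ℕ → Bool) → X) (col : γ × Bool → γ × Bool → γ),
      (∀ i, Continuous (g i)) ∧ Injective (uncurry g) ∧ (∀ c, col (c, false) (c, true) = c) ∧
      ∀ i x j y, (i, x) ≠ (j, y) → (g i x, g j y) ∈ G ∩ O (col i j) := by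
  obtain ⟨L₀, col, h₀, hcol⟩ := exists_base_layer hO hOsymm hOd hOne
  obtain ⟨W, hWo, hWd, hW₀, hWG⟩ := exists_seq_isOpen_dense_of_mem_residual hG
  obtain ⟨L, hL, hLdiam, hLsub⟩ := (hW₀ ▸ h₀).exists_seq hO hOsymm hWo hWd
  -- `PiNat.res x n` lists the first `n` bits of `x`, newest first, matching the children
  -- `b ::ᵥ v` of `exists_seq`.
  set A : γ × Bool → List Bool → Set X := fun i l => L l.length (i, ⟨l, rfl⟩)
  have hA : ∀ i l n (h : l.length = n), A i l = L n (i, ⟨l, h⟩) := by rintro i l n rfl; rfl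
  have hg : ∀ i, ∃ g : (ℕ → Bool) → X, Continuous g ∧ ∀ x n, g x ∈ A i (PiNat.res x n) :=
    fun i => exists_continuous_forall_mem_res (fun l b => hLsub l.length i b ⟨l, rfl⟩)
      (fun x => tendsto_of_tendsto_of_tendsto_of_le_of_le tendsto_const_nhds
        ENNReal.tendsto_inv_nat_nhds_zero (fun _ => zero_le)
        fun n => hA i _ n (PiNat.res_length x n) ▸ hLdiam n _)
      fun l => (hL _).nonempty _
  choose g hgc hgA using hg
  have hgL : ∀ i x n, g i x ∈ L n (i, ⟨PiNat.res x n, PiNat.res_length x n⟩) :=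
    fun i x n => hA i _ n _ ▸ hgA i x n
  have hsep : ∀ i x j y, (i, x) ≠ (j, y) → ∀ᶠ n in atTop,
      ((i, ⟨PiNat.res x n, PiNat.res_length x n⟩) : (γ × Bool) × List.Vector Bool n) ≠
        (j, ⟨PiNat.res y n, PiNat.res_length y n⟩) := by
    intro i x j y h
    obtain rfl | hij := eq_or_ne i j
    · exact (eventually_res_ne fun hxy => h (by rw [hxy])).mono fun n hn h' =>
        hn (congrArg Subtype.val (congrArg Prod.snd h'))
    · exact Eventually.of_forall fun n h' => hij (congrArg Prod.fst h')
  refine ⟨g, col, hgc, fun ⟨i, x⟩ ⟨j, y⟩ hxy => ?_, hcol, fun i x j y h => ⟨?_, ?_⟩⟩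
  · by_contra h
    obtain ⟨n, hn⟩ := (hsep i x j y h).exists
    exact (hL n).pairwise_disjoint hn |>.ne_of_mem (hgL i x n) (hgL j y n) hxy
  · exact hWG _ ((hsep i x j y h).mono fun n hn => ((hL n).prod_subset hn ⟨hgL i x n, hgL j y n⟩).1)
  · obtain ⟨n, hn⟩ := (hsep i x j y h).exists
    exact ((hL n).prod_subset hn ⟨hgL i x n, hgL j y n⟩).2

end BalancedRamsey

theorem stmt_19_general {X : Type*} [TopologicalSpace X] [PolishSpace X] [PerfectSpace X]
    (r : ℕ) (f : X × X → Fin r)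
    (hsymm : ∀ x y : X, f (x, y) = f (y, x))
    (hBP : ∀ c : Fin r, BaireMeasurableSet (f ⁻¹' {c}))
    (hnonmeagre : ∀ c : Fin r,
      ¬ IsMeagre {p : X × X | p.1 ≠ p.2 ∧ f p = c}) :
    ∃ (s : ℕ), s ≤ 2 * r ∧
      ∃ C : Fin s → Set X,
        (∀ i j, i ≠ j → Disjoint (C i) (C j)) ∧
        (∀ i, (C i).Nonempty ∧ IsCompact (C i) ∧ Perfect (C i) ∧
          IsTotallyDisconnected (C i)) ∧
        ∃ (cin : Fin s → Fin r) (cbet : Fin s → Fin s → Fin r),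
          (∀ i, ∀ x ∈ C i, ∀ y ∈ C i, x ≠ y → f (x, y) = cin i) ∧
          (∀ i j, i ≠ j → ∀ x ∈ C i, ∀ y ∈ C j, f (x, y) = cbet i j) ∧
          (∀ c : Fin r, (∃ i, cin i = c) ∨ ∃ i j, i ≠ j ∧ cbet i j = c) := by
  let := TopologicalSpace.upgradeIsCompletelyMetrizable X
  obtain ⟨O, hO, hOsymm, hfO⟩ :=
    BalancedRamsey.exists_isOpen_symm_eventually_forall_iff hsymm hBP
  have hOd : Dense (⋃ c, O c) := dense_of_mem_residual
    (mem_of_superset hfO fun p hp => mem_iUnion.2 ⟨f p, (hp (f p)).1 rfl⟩)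
  have hOne : ∀ c, (O c).Nonempty := fun c => by
    by_contra hc
    exact hnonmeagre c (mem_of_superset hfO fun p hp hpc => hc ⟨p, (hp c).1 hpc.2⟩)
  obtain ⟨g, col, hg, hginj, hcol, hgO⟩ :=
    BalancedRamsey.exists_cantor_family hO hOsymm hOd hOne hfO
  have hf : ∀ i x j y, (i, x) ≠ (j, y) → f (g i x, g j y) = col i j := fun i x j y h =>
    ((hgO i x j y h).1 (col i j)).2 (hgO i x j y h).2
  let e : Fin (2 * r) ≃ Fin r × Bool := (Fintype.equivFinOfCardEq (by simp [mul_comm])).symm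
  have he : ∀ k l, k ≠ l → ∀ x y : ℕ → Bool, (e k, x) ≠ (e l, y) := fun k l hkl x y h =>
    hkl (e.injective (congrArg Prod.fst h))
  refine ⟨2 * r, le_rfl, fun k => range (g (e k)),
    fun k l hkl => disjoint_range_iff.2 fun x y => hginj.ne (he k l hkl x y),
    fun k => BalancedRamsey.nonempty_isCompact_perfect_isTotallyDisconnected_range (hg _)
      (hginj.comp (Prod.mk_right_injective _)),
    fun k => col (e k) (e k), fun k l => col (e k) (e l), ?_,
    fun k l hkl _ ⟨x, hx⟩ _ ⟨y, hy⟩ => hx ▸ hy ▸ hf _ _ _ _ (he k l hkl x y),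
    fun c => Or.inr ⟨e.symm (c, false), e.symm (c, true), by simp, by simp [hcol]⟩⟩
  rintro k _ ⟨x, rfl⟩ _ ⟨y, rfl⟩ hxy
  exact hf _ _ _ _ fun h => hxy (congrArg (uncurry g) h)

/-- **Infinite balanced Ramsey theorem.** Let `X` be a perfect Polish space and
`f : [X]² → [r]` a Baire measurable coloring (viewed as a symmetric map on `X × X`)
such that each color class is non-meagre in `X × X`.  Then there exist `s ≤ 2r`
pairwise disjoint Cantor sets `C₁, …, C_s ⊆ X` such that each `[C_i]²` is
monochromatic, each bipartite pair `C_i × C_j` is monochromatic, and all `r` colors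
appear among these cliques and bipartite graphs. -/
theorem stmt_19 {X : Type*} [TopologicalSpace X] [PolishSpace X] [PerfectSpace X]
    (r : ℕ) (hr : 2 ≤ r) (f : X × X → Fin r)
    (hsymm : ∀ x y : X, f (x, y) = f (y, x))
    (hBP : ∀ c : Fin r, BaireMeasurableSet (f ⁻¹' {c}))
    (hnonmeagre : ∀ c : Fin r,
      ¬ IsMeagre {p : X × X | p.1 ≠ p.2 ∧ f p = c}) :
    ∃ (s : ℕ), s ≤ 2 * r ∧
      ∃ C : Fin s → Set X,
        (∀ i j, i ≠ j → Disjoint (C i) (C j)) ∧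
        (∀ i, (C i).Nonempty ∧ IsCompact (C i) ∧ Perfect (C i) ∧
          IsTotallyDisconnected (C i)) ∧
        ∃ (cin : Fin s → Fin r) (cbet : Fin s → Fin s → Fin r),
          (∀ i, ∀ x ∈ C i, ∀ y ∈ C i, x ≠ y → f (x, y) = cin i) ∧
          (∀ i j, i ≠ j → ∀ x ∈ C i, ∀ y ∈ C j, f (x, y) = cbet i j) ∧
          (∀ c : Fin r, (∃ i, cin i = c) ∨ ∃ i j, i ≠ j ∧ cbet i j = c) :=
  stmt_19_general r f hsymm hBP hnonmeagre
end
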